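/- arXiv:2310.18277 — 9 statements merged into one kernel-verified Lean document; each statement's English description precedes it below -/
import Mathlib

section
/- Let A be a finite set of integers with |A| = k+1 ≥ 2, min(A) = 0, gcd(A) = 1, and a* = max(A). Then there exist integers C, D and finite sets 𝒞 ⊆ [0, C-2] and 𝒟 ⊆ [0, D-2] such that for all h ≥ (k-1)·a*·(a*-1), the h-fold sumset satisfies hA = 𝒞 ∪ [C, h·a* - D] ∪ (h·a* - 𝒟). -/
open scoped Classical

/-- n is a sum of at most h positive elements of A. -/
def RepPos (A : Finset ℤ) (h : ℕ) (n : ℤ) : Prop :=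
  ∃ s : Multiset ℤ, (∀ x ∈ s, x ∈ A ∧ 0 < x) ∧ s.card ≤ h ∧ s.sum = n

/-- n is a sum of exactly h elements of A. -/
def RepEq (A : Finset ℤ) (h : ℕ) (n : ℤ) : Prop :=
  ∃ s : Multiset ℤ, (∀ x ∈ s, x ∈ A) ∧ s.card = h ∧ s.sum = n

def InS (A : Finset ℤ) (n : ℤ) : Prop := ∃ h, RepPos A h n

lemma repPos_nonneg {A h n} (hr : RepPos A h n) : 0 ≤ n := by
  obtain ⟨s, hs, _, rfl⟩ := hr
  exact Multiset.sum_nonneg fun x hx => (hs x hx).2.le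

lemma repPos_card_le {A h n} (hr : RepPos A h n) :
    ∃ s : Multiset ℤ, (∀ x ∈ s, x ∈ A ∧ 0 < x) ∧ (s.card : ℤ) ≤ n ∧ s.card ≤ h ∧ s.sum = n := by
  obtain ⟨s, hs, hc, rfl⟩ := hr
  refine ⟨s, hs, ?_, hc, rfl⟩
  calc (s.card : ℤ) = s.card • (1:ℤ) := by simp
  _ ≤ s.sum := Multiset.card_nsmul_le_sum fun x hx => (hs x hx).2

lemma repPos_sum_le {A h n} {a : ℤ} (ha : 0 ≤ a) (hub : ∀ x ∈ A, x ≤ a) (hr : RepPos A h n) :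
    n ≤ (h : ℤ) * a := by
  obtain ⟨s, hs, hc, rfl⟩ := hr
  have h1 : s.sum ≤ s.card • a := Multiset.sum_le_card_nsmul s a fun x hx => hub x (hs x hx).1
  have h2 : (s.card : ℤ) * a ≤ (h:ℤ) * a :=
    mul_le_mul_of_nonneg_right (by exact_mod_cast hc) ha
  calc s.sum ≤ s.card • a := h1
  _ = (s.card : ℤ) * a := by simp [nsmul_eq_mul]
  _ ≤ _ := h2

lemma repEq_iff_fin (A : Finset ℤ) (h : ℕ) (n : ℤ) :
    (∃ f : Fin h → ℤ, (∀ i, f i ∈ A) ∧ ∑ i, f i = n) ↔ RepEq A h n := by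
  induction h generalizing n with
  | zero =>
    constructor
    · rintro ⟨f, _, rfl⟩
      exact ⟨0, by simp, by simp, by simp⟩
    · rintro ⟨s, hs, hc, rfl⟩
      rw [Multiset.card_eq_zero] at hc
      exact ⟨fun i => 0, fun i => i.elim0, by simp [hc]⟩
  | succ m ih =>
    constructor
    · rintro ⟨f, hf, rfl⟩
      obtain ⟨s, hs, hc, hsum⟩ := (ih (∑ i : Fin m, f i.succ)).1 ⟨fun i => f i.succ, fun i => hf _, rfl⟩
      refine ⟨f 0 ::ₘ s, ?_, by simp [hc], by rw [Multiset.sum_cons, hsum, Fin.sum_univ_succ]⟩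
      intro x hx
      rcases Multiset.mem_cons.1 hx with h | h
      · exact h ▸ hf 0
      · exact hs x h
    · rintro ⟨s, hs, hc, rfl⟩
      have hcp : 0 < Multiset.card s := by rw [hc]; exact m.succ_pos
      obtain ⟨x, hx⟩ := Multiset.card_pos_iff_exists_mem.1 hcp
      obtain ⟨t, rfl⟩ := Multiset.exists_cons_of_mem hx
      have hct : t.card = m := by simpa using hc
      obtain ⟨f, hf, hsum⟩ := (ih t.sum).2 ⟨t, fun y hy => hs y (Multiset.mem_cons_of_mem hy), hct, rfl⟩
      refine ⟨Fin.cons x f, ?_, ?_⟩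
      · intro i
        refine Fin.cases ?_ ?_ i
        · simpa using hs x (Multiset.mem_cons_self x t)
        · intro j; simpa using hf j
      · rw [Fin.sum_univ_succ]; simp [hsum]

lemma repEq_iff_repPos {A : Finset ℤ} (h0 : 0 ∈ A) (hpos : ∀ x ∈ A, 0 ≤ x) (h : ℕ) (n : ℤ) :
    RepEq A h n ↔ RepPos A h n := by
  constructor
  · rintro ⟨s, hs, hc, rfl⟩
    refine ⟨s.filter (fun x => 0 < x), ?_, ?_, ?_⟩
    · intro x hx
      rw [Multiset.mem_filter] at hx
      exact ⟨hs x hx.1, hx.2⟩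
    · exact le_trans (Multiset.card_le_card (Multiset.filter_le _ s)) hc.le
    · have := Multiset.filter_add_not (fun x => 0 < x) s
      have hzero : (s.filter (fun x => ¬ 0 < x)).sum = 0 := by
        apply Multiset.sum_eq_zero
        intro x hx
        rw [Multiset.mem_filter] at hx
        have := hpos x (hs x hx.1)
        omega
      calc (s.filter (fun x => 0 < x)).sum
          = (s.filter (fun x => 0 < x)).sum + (s.filter (fun x => ¬ 0 < x)).sum := by rw [hzero, add_zero]
        _ = s.sum := by rw [← Multiset.sum_add, this]
  · rintro ⟨s, hs, hc, rfl⟩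
    refine ⟨s + Multiset.replicate (h - s.card) 0, ?_, ?_, ?_⟩
    · intro x hx
      rcases Multiset.mem_add.1 hx with h | h
      · exact (hs x h).1
      · rw [Multiset.eq_of_mem_replicate h]; exact h0
    · simp; omega
    · simp

lemma repEq_reflect {A : Finset ℤ} {a : ℤ} (h : ℕ) (n : ℤ) (hr : RepEq A h n) :
    RepEq (A.image (fun x => a - x)) h ((h : ℤ) * a - n) := by
  obtain ⟨s, hs, hc, rfl⟩ := hr
  refine ⟨s.map (fun x => a - x), ?_, by simp [hc], ?_⟩
  · intro x hx
    obtain ⟨y, hy, rfl⟩ := Multiset.mem_map.1 hx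
    exact Finset.mem_image_of_mem _ (hs y hy)
  · rw [Multiset.sum_map_sub]
    simp [hc, nsmul_eq_mul, mul_comm]

lemma finset_gcd_eq_sum (s : Finset ℤ) : ∃ f : ℤ → ℤ, ∑ a ∈ s, f a * a = s.gcd id := by
  induction s using Finset.induction with
  | empty => exact ⟨fun _ => 0, by simp⟩
  | insert _ _ hx =>
    rename_i x s ih
    obtain ⟨f, hf⟩ := ih
    set g : ℤ := s.gcd id with hg
    refine ⟨fun a => if a = x then Int.gcdA x g else Int.gcdB x g * f a, ?_⟩
    rw [Finset.sum_insert hx, Finset.gcd_insert]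
    have h1 : ∑ a ∈ s, (if a = x then Int.gcdA x g else Int.gcdB x g * f a) * a
        = Int.gcdB x g * g := by
      rw [← hf, Finset.mul_sum]
      apply Finset.sum_congr rfl
      intro a ha
      rw [if_neg (by rintro rfl; exact hx ha)]
      ring
    have h4 : (fun a => if a = x then Int.gcdA x g else Int.gcdB x g * f a) x = Int.gcdA x g := by simp
    rw [h1, h4]
    have := Int.gcd_eq_gcd_ab x g
    have h3 : (GCDMonoid.gcd x g : ℤ) = Int.gcd x g := by
      rw [Int.coe_gcd]
    simp only [id_eq]
    rw [h3, this]
    ring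

def reach (A : Finset ℤ) (m : ℕ) : ℕ → Finset (ZMod m)
  | 0 => {0}
  | j+1 => reach A m j ∪ (reach A m j ×ˢ A).image fun p => p.1 + (p.2 : ZMod m)

lemma reach_mono (A : Finset ℤ) (m : ℕ) {i j : ℕ} (hij : i ≤ j) :
    reach A m i ⊆ reach A m j := by
  induction j with
  | zero => rw [Nat.le_zero.1 hij]
  | succ n ih =>
    rcases Nat.lt_or_ge i (n+1) with h | h
    · exact subset_trans (ih (by omega)) (by rw [reach]; exact Finset.subset_union_left)
    · rw [Nat.le_antisymm hij h]

lemma zero_mem_reach (A : Finset ℤ) (m : ℕ) (j : ℕ) : (0 : ZMod m) ∈ reach A m j :=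
  reach_mono A m (Nat.zero_le j) (by rw [reach]; exact Finset.mem_singleton_self 0)

lemma reach_spec (A : Finset ℤ) (m : ℕ) (j : ℕ) (x : ZMod m) (hx : x ∈ reach A m j) :
    ∃ s : Multiset ℤ, (∀ y ∈ s, y ∈ A) ∧ s.card ≤ j ∧ ((s.sum : ℤ) : ZMod m) = x := by
  induction j generalizing x with
  | zero =>
    rw [reach, Finset.mem_singleton] at hx
    exact ⟨0, by simp, by simp, by simp [hx]⟩
  | succ n ih =>
    rw [reach, Finset.mem_union] at hx
    rcases hx with h | h
    · obtain ⟨s, h1, h2, h3⟩ := ih x h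
      exact ⟨s, h1, le_trans h2 (Nat.le_succ n), h3⟩
    · obtain ⟨p, hp, rfl⟩ := Finset.mem_image.1 h
      rw [Finset.mem_product] at hp
      obtain ⟨s, h1, h2, h3⟩ := ih p.1 hp.1
      refine ⟨p.2 ::ₘ s, ?_, by simpa using h2, ?_⟩
      · intro y hy
        rcases Multiset.mem_cons.1 hy with h | h
        · exact h ▸ hp.2
        · exact h1 y h
      · rw [Multiset.sum_cons, Int.cast_add, h3]; ring

lemma exists_stab (A : Finset ℤ) (m : ℕ) (hm : 0 < m) :
    ∃ j, j + 1 ≤ m ∧ reach A m (j+1) = reach A m j := by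
  haveI : NeZero m := ⟨hm.ne'⟩
  by_contra hcon
  push_neg at hcon
  have key : ∀ j, j ≤ m → j + 1 ≤ (reach A m j).card := by
    intro j hj
    induction j with
    | zero => simp [reach]
    | succ n ih =>
      have h1 : reach A m n ⊂ reach A m (n+1) :=
        (Finset.ssubset_iff_of_subset (reach_mono A m (Nat.le_succ n))).2 (by
          by_contra hno
          push_neg at hno
          exact (hcon n (by omega)) (Finset.Subset.antisymm
            (fun x hx => by by_contra hxx; exact hxx (by
              have := hno x; tauto)) (reach_mono A m (Nat.le_succ n))))
      have := Finset.card_lt_card h1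
      have := ih (by omega)
      omega
  have h1 := key m le_rfl
  have h2 : (reach A m m).card ≤ m := by
    have := Finset.card_le_univ (reach A m m)
    simpa [ZMod.card m] using this
  omega

lemma reach_univ (A : Finset ℤ) (m : ℕ) (hm : 0 < m) (hgcd : A.gcd id = 1) (x : ZMod m) :
    x ∈ reach A m (m-1) := by
  haveI : NeZero m := ⟨hm.ne'⟩
  set S : Set (ZMod m) := (fun z : ℤ => (z : ZMod m)) '' (A : Set ℤ) with hS
  have hone : (1 : ZMod m) ∈ AddSubmonoid.closure S := by
    obtain ⟨f, hf⟩ := finset_gcd_eq_sum A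
    rw [hgcd] at hf
    have hcast : (1 : ZMod m) = ∑ a ∈ A, ((f a : ZMod m) * (a : ZMod m)) := by
      have := congrArg (fun z : ℤ => (z : ZMod m)) hf
      push_cast at this
      simpa using this.symm
    rw [hcast]
    apply AddSubmonoid.sum_mem
    intro a ha
    have heq : (f a : ZMod m) * (a : ZMod m) = ((f a : ZMod m)).val • (a : ZMod m) := by
      rw [nsmul_eq_mul, ZMod.natCast_val, ZMod.cast_id]
    rw [heq]
    exact AddSubmonoid.nsmul_mem _ (AddSubmonoid.subset_closure (show (a:ZMod m) ∈ S from ⟨a, ha, rfl⟩)) _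
  have hall : ∀ y : ZMod m, y ∈ AddSubmonoid.closure S := by
    intro y
    have : y = y.val • (1 : ZMod m) := by
      rw [nsmul_eq_mul, mul_one, ZMod.natCast_val, ZMod.cast_id]
    rw [this]
    exact AddSubmonoid.nsmul_mem _ hone _
  obtain ⟨j, hj1, heq⟩ := exists_stab A m hm
  have aux : ∀ c ∈ AddSubmonoid.closure S, ∀ y ∈ reach A m j, y + c ∈ reach A m j := by
    intro c hc
    induction hc using AddSubmonoid.closure_induction with
    | mem z hz =>
      intro y hy
      obtain ⟨a, ha, rfl⟩ := hz
      rw [← heq, reach]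
      exact Finset.mem_union_right _ (Finset.mem_image.2
        ⟨(y, a), Finset.mem_product.2 ⟨hy, ha⟩, rfl⟩)
    | zero => intro y hy; simpa using hy
    | add c₁ c₂ hc₁ hc₂ ih₁ ih₂ =>
      intro y hy
      have := ih₂ _ (ih₁ y hy)
      rwa [add_assoc] at this
  have hx : x ∈ reach A m j := by
    have := aux x (hall x) 0 (zero_mem_reach A m j)
    simpa using this
  exact reach_mono A m (by omega) hx

lemma exists_residue (A : Finset ℤ) (a : ℤ) (hpos : ∀ x ∈ A, 0 ≤ x)
    (hub : ∀ x ∈ A, x ≤ a) (hgcd : A.gcd id = 1) (ha : 1 ≤ a) (r : ℤ) :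
    ∃ t : ℤ, RepPos A (a.toNat - 1) t ∧ 0 ≤ t ∧ t ≤ (a-1)*a ∧ a ∣ t - r := by
  set m := a.toNat with hm
  have hm0 : 0 < m := by omega
  have hma : (m : ℤ) = a := Int.toNat_of_nonneg (by omega)
  obtain ⟨s, hsA, hcard, hsum⟩ := reach_spec A m (m-1) (r : ZMod m)
    (reach_univ A m hm0 hgcd (r : ZMod m))
  set s' := s.filter (fun x => 0 < x) with hs'
  have hsum' : s'.sum = s.sum := by
    have hsplit := Multiset.filter_add_not (fun x => 0 < x) s
    have hzero : (s.filter (fun x => ¬ 0 < x)).sum = 0 := by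
      apply Multiset.sum_eq_zero
      intro x hx
      rw [Multiset.mem_filter] at hx
      have := hpos x (hsA x hx.1)
      omega
    calc s'.sum = s'.sum + (s.filter (fun x => ¬ 0 < x)).sum := by rw [hzero, add_zero]
      _ = s.sum := by rw [← Multiset.sum_add, hsplit]
  have hcard' : s'.card ≤ m - 1 :=
    le_trans (Multiset.card_le_card (Multiset.filter_le _ s)) hcard
  have hmem' : ∀ x ∈ s', x ∈ A ∧ 0 < x := by
    intro x hx
    rw [hs', Multiset.mem_filter] at hx
    exact ⟨hsA x hx.1, hx.2⟩
  refine ⟨s'.sum, ⟨s', hmem', hcard', rfl⟩, ?_, ?_, ?_⟩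
  · exact Multiset.sum_nonneg fun x hx => (hmem' x hx).2.le
  · calc s'.sum ≤ s'.card • a := Multiset.sum_le_card_nsmul s' a fun x hx => hub x (hmem' x hx).1
      _ = (s'.card : ℤ) * a := by simp [nsmul_eq_mul]
      _ ≤ ((m:ℤ) - 1) * a := by
          apply mul_le_mul_of_nonneg_right _ (by omega)
          have h1 : (s'.card : ℤ) ≤ ((m - 1 : ℕ) : ℤ) := by exact_mod_cast hcard'
          have h2 : ((m - 1 : ℕ) : ℤ) = (m:ℤ) - 1 := by omega
          omega
      _ = (a-1)*a := by rw [hma]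
  · rw [hsum']
    have : ((s.sum : ℤ) : ZMod m) = ((r : ℤ) : ZMod m) := hsum
    have hmod := (ZMod.intCast_eq_intCast_iff _ _ _).1 this
    have := Int.ModEq.dvd hmod
    rw [hma] at this
    have h2 : a ∣ -(r - s.sum) := dvd_neg.2 this
    rwa [neg_sub] at h2

lemma repPos_mono {A : Finset ℤ} {h h' : ℕ} {n : ℤ} (hh : h ≤ h') (hr : RepPos A h n) :
    RepPos A h' n := by
  obtain ⟨s, h1, h2, h3⟩ := hr
  exact ⟨s, h1, le_trans h2 hh, h3⟩

lemma repPos_add_mul {A : Finset ℤ} {a : ℤ} (haA : a ∈ A) (ha0 : 0 < a) {h : ℕ} {t : ℤ}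
    (hr : RepPos A h t) (q : ℕ) : RepPos A (h + q) (t + (q : ℤ) * a) := by
  obtain ⟨s, h1, h2, h3⟩ := hr
  refine ⟨s + Multiset.replicate q a, ?_, by simp; omega, ?_⟩
  · intro x hx
    rcases Multiset.mem_add.1 hx with h | h
    · exact h1 x h
    · rw [Multiset.eq_of_mem_replicate h]; exact ⟨haA, ha0⟩
  · rw [Multiset.sum_add, Multiset.sum_replicate, h3]
    simp [nsmul_eq_mul]

lemma inS_repPos {A : Finset ℤ} {n : ℤ} {h : ℕ} (hn : InS A n) (hnh : n ≤ (h:ℤ)) :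
    RepPos A h n := by
  obtain ⟨h', hr⟩ := hn
  obtain ⟨s, hs, hcn, _, hsum⟩ := repPos_card_le hr
  exact ⟨s, hs, by omega, hsum⟩

lemma repPos_middle (A : Finset ℤ) (a : ℤ) (hpos : ∀ x ∈ A, 0 ≤ x)
    (hub : ∀ x ∈ A, x ≤ a) (hgcd : A.gcd id = 1) (ha : 2 ≤ a) (haA : a ∈ A)
    (h : ℕ) (n : ℤ) (h1 : (a-1)*a ≤ n) (h2 : n ≤ (h:ℤ)*a - (a-1)*a) :
    RepPos A h n := by
  obtain ⟨t, hrep, ht0, htb, hdvd⟩ := exists_residue A a hpos hub hgcd (by omega) n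
  have hdvd' : a ∣ n - t := by
    have := dvd_neg.2 hdvd
    rwa [neg_sub] at this
  obtain ⟨q, hq⟩ := hdvd'
  have hq0 : 0 ≤ q := by nlinarith
  have hqle : q ≤ (h:ℤ) - a + 1 := by nlinarith
  have hrep2 := repPos_add_mul haA (by omega) hrep q.toNat
  have hcast : (q.toNat : ℤ) = q := Int.toNat_of_nonneg hq0
  rw [hcast] at hrep2
  have hn : t + q * a = n := by linarith
  rw [hn] at hrep2
  exact repPos_mono (by omega) hrep2


lemma exists_C (A : Finset ℤ) (a : ℤ) (hpos : ∀ x ∈ A, 0 ≤ x)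
    (hub : ∀ x ∈ A, x ≤ a) (hgcd : A.gcd id = 1) (ha : 2 ≤ a) (haA : a ∈ A) :
    ∃ C : ℤ, 0 ≤ C ∧ C ≤ (a-1)*a ∧ (∀ n, C ≤ n → InS A n) ∧ (C = 0 ∨ ¬ InS A (C-1)) := by
  have hwit : 0 ≤ (a-1)*a ∧ ∀ n, (a-1)*a ≤ n → InS A n := by
    refine ⟨by nlinarith, fun n hn => ?_⟩
    obtain ⟨t, hrep, ht0, htb, hdvd⟩ := exists_residue A a hpos hub hgcd (by omega) n
    have hdvd' : a ∣ n - t := by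
      have := dvd_neg.2 hdvd
      rwa [neg_sub] at this
    obtain ⟨q, hq⟩ := hdvd'
    have hq0 : 0 ≤ q := by nlinarith
    have hrep2 := repPos_add_mul haA (by omega) hrep q.toNat
    have hcast : (q.toNat : ℤ) = q := Int.toNat_of_nonneg hq0
    rw [hcast] at hrep2
    have hn : t + q * a = n := by linarith
    rw [hn] at hrep2
    exact ⟨_, hrep2⟩
  obtain ⟨C, hPC, hleast⟩ := Int.exists_least_of_bdd
    (P := fun c => 0 ≤ c ∧ ∀ n, c ≤ n → InS A n)
    ⟨0, fun z hz => hz.1⟩ ⟨(a-1)*a, hwit⟩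
  refine ⟨C, hPC.1, hleast _ hwit, hPC.2, ?_⟩
  rcases eq_or_lt_of_le hPC.1 with h0 | h0
  · exact Or.inl h0.symm
  · refine Or.inr fun hin => ?_
    have : (0 ≤ C - 1 ∧ ∀ n, C - 1 ≤ n → InS A n) := by
      refine ⟨by omega, fun n hn => ?_⟩
      rcases eq_or_lt_of_le hn with h | h
      · exact h ▸ hin
      · exact hPC.2 n (by omega)
    have := hleast _ this
    omega

lemma reflect_props (A : Finset ℤ) (a : ℤ) (h0A : 0 ∈ A) (hpos : ∀ x ∈ A, 0 ≤ x)
    (hub : ∀ x ∈ A, x ≤ a) (haA : a ∈ A) (hgcd : A.gcd id = 1) :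
    0 ∈ A.image (fun x => a - x) ∧ (∀ x ∈ A.image (fun x => a - x), 0 ≤ x) ∧
    a ∈ A.image (fun x => a - x) ∧ (∀ x ∈ A.image (fun x => a - x), x ≤ a) ∧
    (A.image (fun x => a - x)).gcd id = 1 ∧
    (A.image (fun x => a - x)).image (fun x => a - x) = A := by
  set B := A.image (fun x => a - x) with hB
  have hmem : ∀ y ∈ B, ∃ x ∈ A, a - x = y := fun y hy => by
    obtain ⟨x, hx, hxy⟩ := Finset.mem_image.1 hy; exact ⟨x, hx, hxy⟩
  have h0B : 0 ∈ B := Finset.mem_image.2 ⟨a, haA, by ring⟩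
  have hposB : ∀ x ∈ B, 0 ≤ x := by
    intro y hy; obtain ⟨x, hx, rfl⟩ := hmem y hy
    have := hub x hx; omega
  have haB : a ∈ B := Finset.mem_image.2 ⟨0, h0A, by ring⟩
  have hubB : ∀ x ∈ B, x ≤ a := by
    intro y hy; obtain ⟨x, hx, rfl⟩ := hmem y hy
    have := hpos x hx; omega
  have hgcdB : B.gcd id = 1 := by
    have hdvda : B.gcd id ∣ a := Finset.gcd_dvd haB
    have hdvd : ∀ x ∈ A, B.gcd id ∣ x := by
      intro x hx
      have h1 : B.gcd id ∣ a - x := Finset.gcd_dvd (Finset.mem_image.2 ⟨x, hx, rfl⟩)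
      have h2 : B.gcd id ∣ a - (a - x) := dvd_sub hdvda h1
      simpa using h2
    have hdvd1 : B.gcd id ∣ 1 := hgcd ▸ Finset.dvd_gcd fun b hb => hdvd b hb
    have hnn : 0 ≤ B.gcd id := by
      have := Finset.normalize_gcd (s := B) (f := id)
      rw [← this, ← Int.abs_eq_normalize]
      exact abs_nonneg _
    rcases Int.isUnit_iff.1 (isUnit_of_dvd_one hdvd1) with h | h
    · exact h
    · omega
  have himg : B.image (fun x => a - x) = A := by
    rw [hB, Finset.image_image]
    have : ((fun x => a - x) ∘ fun x => a - x) = id := by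
      funext x; simp
    rw [this, Finset.image_id]
  exact ⟨h0B, hposB, haB, hubB, hgcdB, himg⟩

lemma repPos_reflect (A : Finset ℤ) (a : ℤ) (h0A : 0 ∈ A) (hpos : ∀ x ∈ A, 0 ≤ x)
    (hub : ∀ x ∈ A, x ≤ a) (haA : a ∈ A) {h : ℕ} {n : ℤ} (hr : RepPos A h n) :
    RepPos (A.image (fun x => a - x)) h ((h:ℤ)*a - n) := by
  have h0B : 0 ∈ A.image (fun x => a - x) := Finset.mem_image.2 ⟨a, haA, by ring⟩
  have hposB : ∀ x ∈ A.image (fun x => a - x), 0 ≤ x := by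
    intro y hy; obtain ⟨x, hx, rfl⟩ := Finset.mem_image.1 hy
    have := hub x hx; omega
  have h1 : RepEq A h n := (repEq_iff_repPos h0A hpos h n).2 hr
  have h2 := repEq_reflect (a := a) h n h1
  exact (repEq_iff_repPos h0B hposB h _).1 h2

/-- Nathanson's fundamental structure theorem for h-fold sumsets of a normalized finite
set of integers. -/
theorem sumset_structure (A : Finset ℤ) (k : ℕ) (hk : 1 ≤ k) (hcard : A.card = k + 1)
    (hmin : 0 ∈ A ∧ ∀ a ∈ A, 0 ≤ a) (hgcd : A.gcd id = 1)
    (astar : ℤ) (hmax : astar ∈ A ∧ ∀ a ∈ A, a ≤ astar) :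
    ∃ C D : ℤ, ∃ 𝒞 𝒟 : Finset ℤ,
      (↑𝒞 : Set ℤ) ⊆ Set.Icc 0 (C - 2) ∧ (↑𝒟 : Set ℤ) ⊆ Set.Icc 0 (D - 2) ∧
      ∀ h : ℕ, ((k : ℤ) - 1) * astar * (astar - 1) ≤ (h : ℤ) →
        {n : ℤ | ∃ f : Fin h → ℤ, (∀ i, f i ∈ A) ∧ ∑ i, f i = n} =
          (↑𝒞 : Set ℤ) ∪ Set.Icc C ((h : ℤ) * astar - D) ∪
            ((fun d => (h : ℤ) * astar - d) '' ↑𝒟) := by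
  obtain ⟨h0A, hpos⟩ := hmin
  obtain ⟨haA, hub⟩ := hmax
  have hset : ∀ h : ℕ, {n : ℤ | ∃ f : Fin h → ℤ, (∀ i, f i ∈ A) ∧ ∑ i, f i = n}
      = {n : ℤ | RepPos A h n} := by
    intro h; ext n
    rw [Set.mem_setOf_eq, Set.mem_setOf_eq, repEq_iff_fin A h n, repEq_iff_repPos h0A hpos]
  have ha1 : 1 ≤ astar := by
    obtain ⟨b, hb, hbne⟩ := Finset.exists_mem_ne (s := A) (by omega) 0
    have := hpos b hb; have := hub b hb; omega
  by_cases ha2 : 2 ≤ astar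
  · -- main case
    have hk2 : 2 ≤ k := by
      by_contra hlt
      have hdvd : astar ∣ A.gcd id := by
        apply Finset.dvd_gcd
        intro b hb
        obtain ⟨x, y, hxy, hA⟩ := Finset.card_eq_two.1 (by omega : A.card = 2)
        have h0 : (0:ℤ) ∈ ({x,y} : Finset ℤ) := hA ▸ h0A
        have hs : astar ∈ ({x,y} : Finset ℤ) := hA ▸ haA
        have hbm : b ∈ ({x,y} : Finset ℤ) := hA ▸ hb
        simp only [Finset.mem_insert, Finset.mem_singleton] at h0 hs hbm
        have : b = 0 ∨ b = astar := by omega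
        rcases this with rfl | rfl
        · exact dvd_zero astar
        · simp
      rw [hgcd] at hdvd
      have := Int.le_of_dvd one_pos hdvd
      omega
    obtain ⟨C, hC0, hCle, hCin, hCmin⟩ := exists_C A astar hpos hub hgcd ha2 haA
    set B := A.image (fun x => astar - x) with hBdef
    obtain ⟨h0B, hposB, haB, hubB, hgcdB, himg⟩ := reflect_props A astar h0A hpos hub haA hgcd
    obtain ⟨D, hD0, hDle, hDin, hDmin⟩ := exists_C B astar hposB hubB hgcdB ha2 haB
    refine ⟨C, D, (Finset.Icc 0 (C-2)).filter (fun n => InS A n),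
      (Finset.Icc 0 (D-2)).filter (fun n => InS B n), ?_, ?_, ?_⟩
    · intro x hx
      simp only [Finset.coe_filter, Set.mem_setOf_eq, Finset.mem_Icc] at hx
      exact Set.mem_Icc.2 hx.1
    · intro x hx
      simp only [Finset.coe_filter, Set.mem_setOf_eq, Finset.mem_Icc] at hx
      exact Set.mem_Icc.2 hx.1
    · intro h hb
      have hb' : (astar - 1)*astar ≤ (h:ℤ) := by nlinarith
      rw [hset h]
      ext n
      simp only [Set.mem_setOf_eq, Set.mem_union, Set.mem_Icc, Set.mem_image,
        Finset.coe_filter, Finset.mem_Icc]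
      constructor
      · intro hr
        have hn0 := repPos_nonneg hr
        have hnle := repPos_sum_le (by omega) hub hr
        have hInA : InS A n := ⟨h, hr⟩
        have hrB : RepPos B h ((h:ℤ)*astar - n) := repPos_reflect A astar h0A hpos hub haA hr
        have hInB : InS B ((h:ℤ)*astar - n) := ⟨h, hrB⟩
        by_cases hcase1 : n ≤ C - 1
        · left; left
          have hne : n ≠ C - 1 := by
            rcases hCmin with h' | h'
            · omega
            · exact fun he => h' (he ▸ hInA)
          exact ⟨⟨hn0, by omega⟩, hInA⟩
        · by_cases hcase2 : (h:ℤ)*astar - n ≤ D - 1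
          · right
            refine ⟨(h:ℤ)*astar - n, ⟨⟨by omega, ?_⟩, hInB⟩, by ring⟩
            have hne : (h:ℤ)*astar - n ≠ D - 1 := by
              rcases hDmin with h' | h'
              · omega
              · exact fun he => h' (he ▸ hInB)
            omega
          · left; right; exact ⟨by omega, by omega⟩
      · intro hmem
        rcases hmem with (hc | hmid) | himg'
        · exact inS_repPos hc.2 (by omega)
        · by_cases hsm : n ≤ (h:ℤ)*astar - (astar-1)*astar
          · by_cases hlow : n < (astar-1)*astar
            · exact inS_repPos (hCin n hmid.1) (by omega)
            · exact repPos_middle A astar hpos hub hgcd ha2 haA h n (by omega) hsm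
          · have hInB : InS B ((h:ℤ)*astar - n) := hDin _ (by omega)
            have hrB : RepPos B h ((h:ℤ)*astar - n) := inS_repPos hInB (by omega)
            have hres := repPos_reflect B astar h0B hposB hubB haB hrB
            rw [himg] at hres
            have heq : (h:ℤ)*astar - ((h:ℤ)*astar - n) = n := by ring
            rwa [heq] at hres
        · obtain ⟨d, ⟨⟨hd0, hd2⟩, hInB⟩, rfl⟩ := himg'
          have hrB : RepPos B h d := inS_repPos hInB (by omega)
          have hres := repPos_reflect B astar h0B hposB hubB haB hrB
          rwa [himg] at hres
  · -- astar = 1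
    have ha : astar = 1 := by omega
    refine ⟨0, 0, ∅, ∅, by simp, by simp, ?_⟩
    intro h hb
    rw [hset h]
    ext n
    simp only [Set.mem_setOf_eq, Finset.coe_empty, Set.empty_union, Set.image_empty,
      Set.union_empty, Set.mem_Icc]
    constructor
    · intro hr
      have h1 := repPos_nonneg hr
      have h2 := repPos_sum_le (by omega) hub hr
      omega
    · rintro ⟨h1, h2⟩
      rw [ha, mul_one, sub_zero] at h2
      have base : RepPos A 0 0 := ⟨0, fun x hx => absurd hx (Multiset.notMem_zero x), by simp, rfl⟩
      have := repPos_add_mul haA (by omega) base n.toNat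
      have hcast : (0:ℤ) + (n.toNat : ℤ) * astar = n := by rw [ha]; omega
      rw [hcast] at this
      exact repPos_mono (by omega) this
end

section
/- Every nonempty finite subset A of an abelian group G is an asymptotic (r, ℓ)-approximate group for suitable r and ℓ: for every integer r ≥ 1 there exist ℓ and h₀ such that for each h ≥ h₀ there is a set X_h ⊆ G with |X_h| ≤ ℓ and r·(hA) ⊆ X_h + hA. -/
/-!
Write an element of `(r h) • A` as `∑ c a • a` with `∑ c a = r h` and divide every multiplicity
by `m = h / #A`: `c a = m q a + y a` with `y a < m`. The remainders give an element of `s • A` with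
`s ≤ #A (m - 1) < h`, which becomes an element of `h • A` after adding `h - s` copies of a fixed
`a₀ ∈ A`. What is left, `∑ (m q a) • a - (h - s) • a₀`, depends only on `q` (as `s = r h - m ∑ q`),
and `q a ≤ r h / m ≤ 2 r #A`, so at most `(2 r #A + 1) ^ #A` translates are needed, whatever `h` is.
-/

open Pointwise Finset

section

variable {G : Type*} [AddCommGroup G]

theorem nsmul_eq_setOf_fin_sum (s : Set G) (n : ℕ) :
    n • s = {x | ∃ f : Fin n → G, (∀ i, f i ∈ s) ∧ ∑ i, f i = x} := by
  ext x
  simp only [Set.mem_nsmul, List.sum_ofFn, Set.mem_ofPred_eq]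
  exact ⟨fun ⟨f, hf⟩ => ⟨_, fun i => (f i).2, hf⟩, fun ⟨f, hf, hx⟩ => ⟨fun i => ⟨f i, hf i⟩, hx⟩⟩

theorem weighted_sum_mem_nsmul (A : Finset G) (w : A → ℕ) :
    ∑ a, w a • (a : G) ∈ (∑ a, w a) • (A : Set G) := by
  rw [← sum_nsmul_assoc]
  exact Set.finsetSum_mem_finsetSum _ _ _ fun a _ => Set.nsmul_mem_nsmul a.2

theorem exists_weights_of_mem_nsmul {A : Finset G} {n : ℕ} {x : G} (hx : x ∈ n • (A : Set G)) :
    ∃ w : A → ℕ, ∑ a, w a = n ∧ ∑ a, w a • (a : G) = x := by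
  classical
  induction n generalizing x with
  | zero => exact ⟨0, by simp, by simpa [eq_comm] using hx⟩
  | succ n ih =>
    rw [succ_nsmul] at hx
    obtain ⟨y, hy, a, ha, rfl⟩ := hx
    obtain ⟨w, rfl, rfl⟩ := ih hy
    refine ⟨w + Pi.single ⟨a, ha⟩ 1, ?_, ?_⟩
    · simp [sum_add_distrib]
    · simp [sum_add_distrib, add_nsmul, Pi.single_apply, ite_smul]

theorem exists_card_le_nsmul_subset_add_nsmul {A : Finset G} (hA : A.Nonempty) {n h m Q : ℕ}
    (hm : 0 < m) (hh : #A * (m - 1) < h) (hn : n ≤ m * Q) :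
    ∃ X : Finset G, #X ≤ (Q + 1) ^ #A ∧ n • (A : Set G) ⊆ X + h • (A : Set G) := by
  classical
  obtain ⟨a₀, ha₀⟩ := hA
  let box := Fintype.piFinset fun _ : A => range (Q + 1)
  refine ⟨box.image fun q : A → ℕ => ∑ a, (m * q a) • (a : G) - (h + m * ∑ a, q a - n) • a₀,
    card_image_le.trans (by simp [box]), ?_⟩
  rintro _ hz
  obtain ⟨c, rfl, rfl⟩ := exists_weights_of_mem_nsmul hz
  set q : A → ℕ := fun a => c a / m
  set y : A → ℕ := fun a => c a % m
  have hc : ∀ a, c a = m * q a + y a := fun a => (Nat.div_add_mod _ _).symm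
  have hy : ∑ a, y a < h := calc
    ∑ a, y a ≤ #A * (m - 1) := by
      simpa using sum_le_card_nsmul univ y (m - 1) fun a _ =>
        Nat.le_sub_one_of_lt (Nat.mod_lt _ hm)
    _ < h := hh
  have hq : q ∈ box := Fintype.mem_piFinset.2 fun a => mem_range_succ_iff.2 <|
    Nat.div_le_of_le_mul <| (single_le_sum (fun _ _ => Nat.zero_le _) (mem_univ a)).trans hn
  have hqy : m * ∑ a, q a + ∑ a, y a = ∑ a, c a := by
    simp only [hc, sum_add_distrib, mul_sum]
  refine Set.mem_add.2
    ⟨_, mem_image_of_mem _ hq, ∑ a, y a • (a : G) + (h - ∑ a, y a) • a₀, ?_, ?_⟩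
  · have := Set.add_mem_add (weighted_sum_mem_nsmul A y)
      (Set.nsmul_mem_nsmul (n := h - ∑ a, y a) ha₀)
    rwa [← add_nsmul, Nat.add_sub_cancel' hy.le] at this
  · rw [show h + m * ∑ a, q a - ∑ a, c a = h - ∑ a, y a by omega]
    simp only [hc, add_nsmul, sum_add_distrib, mul_nsmul]
    abel

theorem exists_card_le_mul_nsmul_subset_add_nsmul {A : Finset G} (hA : A.Nonempty) (r : ℕ)
    {h : ℕ} (hh : #A ≤ h) :
    ∃ X : Finset G, #X ≤ (2 * r * #A + 1) ^ #A ∧ (r * h) • (A : Set G) ⊆ X + h • (A : Set G) := by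
  have hK : 0 < #A := hA.card_pos
  have hdiv := Nat.div_add_mod h #A
  have hmod := Nat.mod_lt h hK
  have hm : 0 < h / #A := Nat.div_pos hh hK
  have hKm : #A ≤ #A * (h / #A) := Nat.le_mul_of_pos_right _ hm
  apply exists_card_le_nsmul_subset_add_nsmul hA hm
  · rw [Nat.mul_sub_one]
    omega
  · calc r * h ≤ r * (2 * (#A * (h / #A))) := Nat.mul_le_mul_left r (by omega)
      _ = h / #A * (2 * r * #A) := by ring

end

/-- Nathanson: every nonempty finite subset of an abelian group is an asymptotic
(r, ℓ)-approximate group. -/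
theorem asymptotic_approximate_group (G : Type*) [AddCommGroup G]
    (A : Finset G) (hA : A.Nonempty) :
    ∀ r : ℕ, 1 ≤ r → ∃ ℓ : ℕ, ∃ h₀ : ℕ, ∀ h ≥ h₀, ∃ X : Finset G,
      X.card ≤ ℓ ∧
      {z : G | ∃ g : Fin r → G,
          (∀ j, g j ∈ {y : G | ∃ f : Fin h → G, (∀ i, f i ∈ A) ∧ ∑ i, f i = y}) ∧
          ∑ j, g j = z} ⊆
        {z : G | ∃ x ∈ X, ∃ y ∈ {y : G | ∃ f : Fin h → G, (∀ i, f i ∈ A) ∧ ∑ i, f i = y},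
          z = x + y} := by
  intro r _
  refine ⟨(2 * r * #A + 1) ^ #A, #A, fun h hh => ?_⟩
  obtain ⟨X, hX, hsub⟩ := exists_card_le_mul_nsmul_subset_add_nsmul hA r hh
  have hA_h : {y : G | ∃ f : Fin h → G, (∀ i, f i ∈ A) ∧ ∑ i, f i = y} = h • (A : Set G) :=
    (nsmul_eq_setOf_fin_sum _ _).symm
  refine ⟨X, hX, ?_⟩
  rw [hA_h, ← nsmul_eq_setOf_fin_sum, ← mul_nsmul']
  rintro z hz
  obtain ⟨x, hx, y, hy, rfl⟩ := hsub hz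
  exact ⟨x, hx, y, hy, rfl⟩
end

section
/- For the greedy B_h-set (a_k(h))_{k≥0} with a₀(h)=0, a₁(h)=1, the third element satisfies a₃(h) = h² + h + 1 for all h ≥ 1. -/
/-- A is a B_h-set: each integer has at most one representation as a weakly increasing
sum of h elements of A. -/
def IsBhSet (h : ℕ) (A : Set ℕ) : Prop :=
  ∀ f g : Fin h → ℕ, (∀ i, f i ∈ A) → (∀ i, g i ∈ A) → Monotone f → Monotone g →
    ∑ i, f i = ∑ i, g i → f = g

/-!
Write `M = h² + h + 1`. A monotone `h`-tuple is determined by its multiset of values, so being a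
B_h-set is a statement about multisets of size `h`, and when `0 ∈ A` shorter multisets may be
padded with zeros. Each `2 ≤ m ≤ h` is both `m` and `1 + ⋯ + 1`, which forces `a₂ = h + 1`. Each
`h + 1 < m < M`, written `m = q (h + 1) + r` with `r ≤ h`, is a sum of `r` ones and `q` copies of
`h + 1` when `q + r ≤ h`; otherwise `m` plus `h + 1 - r` ones equals `q + 1` copies of `h + 1`.
Conversely `{0, 1, h + 1, M}` is a B_h-set, because a sum `c₁ + c₂ (h + 1) + c₃ M` with
`c₁ + c₂ + c₃ ≤ h` is a mixed-radix expansion whose digits are recovered by division.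
-/

open Multiset

theorem Monotone.eq_of_multiset_map_eq {α : Type*} [LinearOrder α] {n : ℕ} {f g : Fin n → α}
    (hf : Monotone f) (hg : Monotone g) (hfg : Finset.univ.val.map f = Finset.univ.val.map g) :
    f = g := by
  rw [Fin.univ_val_map, Fin.univ_val_map, coe_eq_coe] at hfg
  exact List.ofFn_injective (hfg.eq_of_sortedLE hf.sortedLE_ofFn hg.sortedLE_ofFn)

theorem Multiset.exists_monotone_map_eq {α : Type*} [LinearOrder α] {n : ℕ} (s : Multiset α)
    (hs : card s = n) : ∃ f : Fin n → α, Monotone f ∧ Finset.univ.val.map f = s := by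
  subst hs
  refine ⟨(s.sort).get ∘ Fin.cast (length_sort (s := s) _).symm, ?_, ?_⟩
  · exact (List.sortedLE_iff_pairwise.2 (pairwise_sort s _)).monotone_get.comp fun _ _ => id
  · rw [Fin.univ_val_map, Function.comp_def, ← List.ofFn_congr, List.ofFn_get, sort_eq]
    exact length_sort _

theorem isBhSet_iff {h : ℕ} {A : Set ℕ} :
    IsBhSet h A ↔ ∀ s t : Multiset ℕ, card s = h → card t = h → (∀ x ∈ s, x ∈ A) →
      (∀ x ∈ t, x ∈ A) → s.sum = t.sum → s = t := by
  constructor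
  · intro H s t hs ht hsA htA hst
    obtain ⟨f, hf, rfl⟩ := s.exists_monotone_map_eq hs
    obtain ⟨g, hg, rfl⟩ := t.exists_monotone_map_eq ht
    simp only [← Finset.sum_eq_multiset_sum] at hst
    rw [H f g (fun i => hsA _ (mem_map_of_mem f (Finset.mem_univ i)))
      (fun i => htA _ (mem_map_of_mem g (Finset.mem_univ i))) hf hg hst]
  · intro H f g hfA hgA hf hg hfg
    refine hf.eq_of_multiset_map_eq hg (H _ _ (by simp) (by simp) ?_ ?_ ?_)
    · simpa using hfA
    · simpa using hgA
    · simpa only [← Finset.sum_eq_multiset_sum] using hfg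

theorem IsBhSet.mono {h : ℕ} {A B : Set ℕ} (hAB : A ⊆ B) (H : IsBhSet h B) : IsBhSet h A :=
  fun f g hf hg => H f g (fun i => hAB (hf i)) (fun i => hAB (hg i))

theorem IsBhSet.eq_of_sum_eq {h : ℕ} {A : Set ℕ} (H : IsBhSet h A) (h0 : 0 ∈ A)
    {s t : Multiset ℕ} (hs : card s ≤ h) (ht : card t ≤ h) (hsA : ∀ x ∈ s, x ∈ A)
    (htA : ∀ x ∈ t, x ∈ A) (hs0 : 0 ∉ s) (ht0 : 0 ∉ t) (hst : s.sum = t.sum) : s = t := by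
  have pad : ∀ u : Multiset ℕ, (∀ x ∈ u, x ∈ A) → ∀ x ∈ u + replicate (h - card u) 0, x ∈ A := by
    rintro u huA x hx
    rcases mem_add.1 hx with hx | hx
    exacts [huA x hx, (eq_of_mem_replicate hx).symm ▸ h0]
  have e := isBhSet_iff.1 H _ _ (by simp only [card_add, card_replicate]; omega)
    (by simp only [card_add, card_replicate]; omega) (pad s hsA) (pad t htA) (by simp [hst])
  ext x
  rcases eq_or_ne x 0 with rfl | hx
  · rw [count_eq_zero.2 hs0, count_eq_zero.2 ht0]
  · simpa [count_replicate, hx.symm] using congrArg (count x) e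

theorem not_isBhSet_of_mem_of_le {h m : ℕ} {A : Set ℕ} (h0 : 0 ∈ A) (h1 : 1 ∈ A) (hmA : m ∈ A)
    (hm : 2 ≤ m) (hmh : m ≤ h) : ¬IsBhSet h A := by
  intro H
  have e : {m} = replicate m 1 :=
    H.eq_of_sum_eq h0 (by simp only [card_singleton]; omega) (by simpa) (by simpa)
      (by simp [mem_replicate, h1]) (mem_singleton.not.2 (by omega)) (by simp [mem_replicate])
      (by simp [sum_replicate])
  have : m ∈ replicate m 1 := e ▸ mem_singleton_self m
  simp only [mem_replicate] at this
  omega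

theorem not_isBhSet_of_mem_of_lt {h m : ℕ} {A : Set ℕ} (h0 : 0 ∈ A) (h1 : 1 ∈ A)
    (hh1 : h + 1 ∈ A) (hmA : m ∈ A) (hm : h + 1 < m) (hmh : m < h ^ 2 + h + 1) :
    ¬IsBhSet h A := by
  intro H
  obtain ⟨q, r, hr, rfl⟩ : ∃ q r, r < h + 1 ∧ m = (h + 1) * q + r :=
    ⟨m / (h + 1), m % (h + 1), Nat.mod_lt _ (by omega), (Nat.div_add_mod m (h + 1)).symm⟩
  have hq : 1 ≤ q := by nlinarith
  have hqh : q ≤ h := by nlinarith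
  rcases le_or_gt (q + r) h with hqr | hqr
  · have e : {(h + 1) * q + r} = replicate r 1 + replicate q (h + 1) :=
      H.eq_of_sum_eq h0 (by simp only [card_singleton]; omega)
        (by simp only [card_add, card_replicate]; omega) (by simpa)
        (by simp [mem_replicate, or_imp, forall_and, h1, hh1]) (mem_singleton.not.2 (by omega))
        (by simp [mem_replicate])
        (by simp only [sum_singleton, sum_add, sum_replicate, smul_eq_mul, mul_one]; ring)
    have : (h + 1) * q + r ∈ replicate r 1 + replicate q (h + 1) :=
      e ▸ mem_singleton_self _
    simp only [mem_add, mem_replicate] at this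
    rcases this with ⟨-, h'⟩ | ⟨-, h'⟩ <;> nlinarith
  · have hq_succ : q + 1 ≤ h := by nlinarith
    have e : replicate (h + 1 - r) 1 + {(h + 1) * q + r} = replicate (q + 1) (h + 1) :=
      H.eq_of_sum_eq h0 (by simp only [card_add, card_replicate, card_singleton]; omega)
        (by simp only [card_replicate]; omega)
        (by simp [mem_replicate, or_imp, forall_and, h1, hmA]) (by simp [mem_replicate, hh1])
        (by simp only [mem_add, mem_replicate, mem_singleton]; omega) (by simp [mem_replicate])
        (by simp only [sum_add, sum_replicate, smul_eq_mul, mul_one, sum_singleton]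
            zify [hr.le]; ring)
    have : (h + 1) * q + r ∈ replicate (q + 1) (h + 1) := e ▸ by simp
    simp only [mem_replicate] at this
    nlinarith

theorem Nat.eq_and_eq_of_add_mul_eq_add_mul {b x y x' y' : ℕ} (hx : x < b) (hx' : x' < b)
    (h : x + y * b = x' + y' * b) : x = x' ∧ y = y' := by
  obtain rfl : x = x' := by
    simpa only [Nat.add_mul_mod_self_right, Nat.mod_eq_of_lt hx, Nat.mod_eq_of_lt hx']
      using congrArg (· % b) h
  exact ⟨rfl, Nat.eq_of_mul_eq_mul_right (by omega) (Nat.add_left_cancel h)⟩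

theorem counts_eq_of_sum_eq {h c₁ c₂ c₃ d₁ d₂ d₃ : ℕ} (hc : c₁ + c₂ + c₃ ≤ h)
    (hd : d₁ + d₂ + d₃ ≤ h)
    (e : c₁ + (c₂ * (h + 1) + c₃ * (h ^ 2 + h + 1)) = d₁ + (d₂ * (h + 1) + d₃ * (h ^ 2 + h + 1))) :
    c₁ = d₁ ∧ c₂ = d₂ ∧ c₃ = d₃ := by
  rw [← add_assoc, ← add_assoc] at e
  -- `c₁ + c₂ (h + 1) ≤ h (h + 1) < h² + h + 1`
  obtain ⟨e₁₂, rfl⟩ := Nat.eq_and_eq_of_add_mul_eq_add_mul (by nlinarith) (by nlinarith) e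
  obtain ⟨rfl, rfl⟩ := Nat.eq_and_eq_of_add_mul_eq_add_mul (by omega) (by omega) e₁₂
  exact ⟨rfl, rfl, rfl⟩

theorem isBhSet_zero_one_succ_sq_add_succ {h : ℕ} (hh : 1 ≤ h) :
    IsBhSet h {0, 1, h + 1, h ^ 2 + h + 1} := by
  set S : Finset ℕ := {0, 1, h + 1, h ^ 2 + h + 1} with hS
  have expand : ∀ u : Multiset ℕ, (∀ x ∈ u, x ∈ S) →
      u.sum = count 1 u + (count (h + 1) u * (h + 1) +
        count (h ^ 2 + h + 1) u * (h ^ 2 + h + 1)) ∧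
      card u = count 0 u + (count 1 u + (count (h + 1) u + count (h ^ 2 + h + 1) u)) := by
    intro u hu
    rw [Finset.sum_multiset_count_of_subset u S fun x hx => hu x (mem_toFinset.1 hx),
      ← sum_count_eq_card hu]
    have : h ≠ 0 := by omega
    simp [hS, Finset.sum_insert, this]
  rw [isBhSet_iff]
  intro s t hs ht hsA htA hst
  have hsS : ∀ x ∈ s, x ∈ S := by simpa [hS] using hsA
  have htS : ∀ x ∈ t, x ∈ S := by simpa [hS] using htA
  obtain ⟨hs_sum, hs_card⟩ := expand s hsS
  obtain ⟨ht_sum, ht_card⟩ := expand t htS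
  have e : count 1 s + (count (h + 1) s * (h + 1) + count (h ^ 2 + h + 1) s * (h ^ 2 + h + 1)) =
      count 1 t + (count (h + 1) t * (h + 1) + count (h ^ 2 + h + 1) t * (h ^ 2 + h + 1)) := by
    rw [← hs_sum, ← ht_sum, hst]
  obtain ⟨e₁, e₂, e₃⟩ := counts_eq_of_sum_eq (by omega) (by omega) e
  ext x
  by_cases hx : x ∈ S
  · simp only [hS, Finset.mem_insert, Finset.mem_singleton] at hx
    rcases hx with rfl | rfl | rfl | rfl <;> omega
  · rw [count_eq_zero.2 (mt (hsS x) hx), count_eq_zero.2 (mt (htS x) hx)]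

theorem Nat.image_Iic_add_one {α : Type*} (a : ℕ → α) (k : ℕ) :
    a '' Set.Iic (k + 1) = insert (a (k + 1)) (a '' Set.Iic k) := by
  rw [← Order.succ_eq_add_one, Order.Iic_succ, Set.image_insert_eq]

theorem sInf_greedy_eq {h b c : ℕ} {B : Set ℕ} (hbc : b < c) (hc : IsBhSet h (insert c B))
    (hmin : ∀ m, b < m → m < c → ¬IsBhSet h (insert m B)) :
    sInf {m | b < m ∧ IsBhSet h (insert m B)} = c :=
  IsLeast.csInf_eq ⟨⟨hbc, hc⟩, fun m ⟨hbm, hm⟩ => not_lt.1 fun hmc => hmin m hbm hmc hm⟩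

/-- For the greedy B_h-set with a₀ = 0, a₁ = 1, one has a₃(h) = h² + h + 1. -/
theorem greedy_Bh_a3 (h : ℕ) (hh : 1 ≤ h) (a : ℕ → ℕ)
    (h0 : a 0 = 0) (h1 : a 1 = 1)
    (hgreedy : ∀ k : ℕ, 1 ≤ k →
      a (k + 1) = sInf {m : ℕ | a k < m ∧ IsBhSet h (insert m (a '' Set.Iic k))}) :
    a 3 = h ^ 2 + h + 1 := by
  have hA₁ : a '' Set.Iic 1 = {1, 0} := by
    rw [Nat.image_Iic_add_one, show Set.Iic 0 = {0} from Set.Iic_bot, Set.image_singleton, h0, h1]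
  have ha₂ : a 2 = h + 1 := by
    rw [hgreedy 1 le_rfl, h1, hA₁]
    refine sInf_greedy_eq (by omega) ((isBhSet_zero_one_succ_sq_add_succ hh).mono ?_)
      fun m hm hmh => not_isBhSet_of_mem_of_le (by simp) (by simp) (by simp) hm (by omega)
    simp [Set.insert_subset_iff]
  have hA₂ : a '' Set.Iic 2 = {h + 1, 1, 0} := by rw [Nat.image_Iic_add_one, hA₁, ha₂]
  rw [hgreedy 2 (by norm_num), ha₂, hA₂]
  refine sInf_greedy_eq (by nlinarith) ((isBhSet_zero_one_succ_sq_add_succ hh).mono ?_)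
    fun m hm hmh => not_isBhSet_of_mem_of_lt (by simp) (by simp) (by simp) (by simp) hm hmh
  simp [Set.insert_subset_iff]
end

section
/- For the greedy B_h-set (a_k(h))_{k≥0} with a₀(h)=0, a₁(h)=1, the fourth element satisfies a₄(h) = (h+1)³/2 if h is odd, and a₄(h) = (h³ + 2h² + 3h + 2)/2 if h is even. -/
def cnt {n : ℕ} (f : Fin n → ℕ) (v : ℕ) : ℕ := (Finset.univ.filter (fun i => f i = v)).card

lemma cnt_zero {n : ℕ} {S : Finset ℕ} {f : Fin n → ℕ} (hf : ∀ i, f i ∈ S) {v : ℕ}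
    (hv : v ∉ S) : cnt f v = 0 := by
  rw [cnt, Finset.card_eq_zero, Finset.filter_eq_empty_iff]
  exact fun i _ hiv => hv (hiv ▸ hf i)
open Finset

lemma count_ofFn {n : ℕ} (f : Fin n → ℕ) (v : ℕ) : (List.ofFn f).count v = cnt f v := by
  classical
  have h1 : ((List.ofFn f : List ℕ) : Multiset ℕ) = Finset.univ.val.map f := by
    rw [List.ofFn_eq_map, Fin.univ_def]; rfl
  have h2 : (List.ofFn f).count v = Multiset.count v ((List.ofFn f : List ℕ) : Multiset ℕ) := by
    simp
  rw [h2, h1, Multiset.count_map, cnt, Finset.card_filter]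
  have h3 : Multiset.card (Multiset.filter (fun a => v = f a) Finset.univ.val)
      = (Finset.filter (fun a => v = f a) Finset.univ).card := rfl
  rw [h3, Finset.card_filter]
  exact Finset.sum_congr rfl (fun i _ => by simp [eq_comm])

lemma mono_eq {n : ℕ} {f g : Fin n → ℕ} (hf : Monotone f) (hg : Monotone g)
    (hc : ∀ v, cnt f v = cnt g v) : f = g := by
  apply List.ofFn_injective
  exact List.Perm.eq_of_sortedLE
    (hf.sortedLE_ofFn) (hg.sortedLE_ofFn)
    (List.perm_iff_count.2 fun v => by rw [count_ofFn, count_ofFn]; exact hc v)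

lemma cnt_sum {n : ℕ} (S : Finset ℕ) (f : Fin n → ℕ) (hf : ∀ i, f i ∈ S) :
    ∑ i, f i = ∑ v ∈ S, cnt f v * v := by
  classical
  rw [← Finset.sum_fiberwise_of_maps_to (fun i _ => hf i) (fun i => f i)]
  refine Finset.sum_congr rfl fun v _ => ?_
  rw [Finset.sum_congr rfl (fun i hi => (Finset.mem_filter.1 hi).2), Finset.sum_const,
    smul_eq_mul, cnt]

lemma cnt_total {n : ℕ} (S : Finset ℕ) (f : Fin n → ℕ) (hf : ∀ i, f i ∈ S) :
    ∑ v ∈ S, cnt f v = n := by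
  classical
  have := Finset.card_eq_sum_card_fiberwise (fun i (_ : i ∈ Finset.univ) => hf i)
  simpa [cnt] using this.symm
open Finset

/-- step function: 0 on [0,t1), v1 on [t1,t2), v2 on [t2,t3), v3 on [t3,t4), v4 on [t4,∞) -/
def stp (t1 t2 t3 t4 v1 v2 v3 v4 i : ℕ) : ℕ :=
  if i < t1 then 0 else if i < t2 then v1 else if i < t3 then v2 else if i < t4 then v3 else v4

lemma stp_mono {n : ℕ} (t1 t2 t3 t4 v1 v2 v3 v4 : ℕ) (h12 : t1 ≤ t2) (h23 : t2 ≤ t3)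
    (h34 : t3 ≤ t4) (hv1 : v1 ≤ v2) (hv2 : v2 ≤ v3) (hv3 : v3 ≤ v4) :
    Monotone (fun i : Fin n => stp t1 t2 t3 t4 v1 v2 v3 v4 i) := by
  intro i j hij
  have : (i : ℕ) ≤ j := hij
  simp only [stp]
  split_ifs <;> omega

lemma stp_mem {t1 t2 t3 t4 v1 v2 v3 v4 i : ℕ} :
    stp t1 t2 t3 t4 v1 v2 v3 v4 i = 0 ∨ stp t1 t2 t3 t4 v1 v2 v3 v4 i = v1 ∨
    stp t1 t2 t3 t4 v1 v2 v3 v4 i = v2 ∨ stp t1 t2 t3 t4 v1 v2 v3 v4 i = v3 ∨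
    stp t1 t2 t3 t4 v1 v2 v3 v4 i = v4 := by
  simp only [stp]; split_ifs <;> simp

lemma stp_block (a b t1 t2 t3 t4 v1 v2 v3 v4 w : ℕ)
    (hw : ∀ i, a ≤ i → i < b → stp t1 t2 t3 t4 v1 v2 v3 v4 i = w) :
    ∑ i ∈ Finset.Ico a b, stp t1 t2 t3 t4 v1 v2 v3 v4 i = (b - a) * w := by
  rw [Finset.sum_congr rfl (fun i hi => hw i (Finset.mem_Ico.1 hi).1 (Finset.mem_Ico.1 hi).2),
    Finset.sum_const, Nat.card_Ico, smul_eq_mul]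

lemma stp_sum {n : ℕ} (t1 t2 t3 t4 v1 v2 v3 v4 : ℕ) (h12 : t1 ≤ t2) (h23 : t2 ≤ t3)
    (h34 : t3 ≤ t4) (h4n : t4 ≤ n) :
    ∑ i : Fin n, stp t1 t2 t3 t4 v1 v2 v3 v4 (i : ℕ)
      = (t2 - t1) * v1 + (t3 - t2) * v2 + (t4 - t3) * v3 + (n - t4) * v4 := by
  rw [Fin.sum_univ_eq_sum_range (fun i => stp t1 t2 t3 t4 v1 v2 v3 v4 i)]
  rw [Finset.range_eq_Ico]
  rw [← Finset.sum_Ico_consecutive _ (Nat.zero_le t4) h4n,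
    ← Finset.sum_Ico_consecutive _ (Nat.zero_le t3) h34,
    ← Finset.sum_Ico_consecutive _ (Nat.zero_le t2) h23,
    ← Finset.sum_Ico_consecutive _ (Nat.zero_le t1) h12]
  have B0 : ∑ i ∈ Finset.Ico 0 t1, stp t1 t2 t3 t4 v1 v2 v3 v4 i = (t1 - 0) * 0 :=
    stp_block _ _ _ _ _ _ _ _ _ _ _ (fun i _ h2 => by simp only [stp]; rw [if_pos h2])
  have B1 : ∑ i ∈ Finset.Ico t1 t2, stp t1 t2 t3 t4 v1 v2 v3 v4 i = (t2 - t1) * v1 :=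
    stp_block _ _ _ _ _ _ _ _ _ _ _ (fun i h1 h2 => by
      simp only [stp]; rw [if_neg (by omega), if_pos h2])
  have B2 : ∑ i ∈ Finset.Ico t2 t3, stp t1 t2 t3 t4 v1 v2 v3 v4 i = (t3 - t2) * v2 :=
    stp_block _ _ _ _ _ _ _ _ _ _ _ (fun i h1 h2 => by
      simp only [stp]; rw [if_neg (by omega), if_neg (by omega), if_pos h2])
  have B3 : ∑ i ∈ Finset.Ico t3 t4, stp t1 t2 t3 t4 v1 v2 v3 v4 i = (t4 - t3) * v3 :=
    stp_block _ _ _ _ _ _ _ _ _ _ _ (fun i h1 h2 => by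
      simp only [stp]; rw [if_neg (by omega), if_neg (by omega), if_neg (by omega), if_pos h2])
  have B4 : ∑ i ∈ Finset.Ico t4 n, stp t1 t2 t3 t4 v1 v2 v3 v4 i = (n - t4) * v4 :=
    stp_block _ _ _ _ _ _ _ _ _ _ _ (fun i h1 h2 => by
      simp only [stp]
      rw [if_neg (by omega), if_neg (by omega), if_neg (by omega), if_neg (by omega)])
  rw [B0, B1, B2, B3, B4]
  omega

lemma stp_le {t1 t2 t3 t4 v1 v2 v3 v4 i : ℕ} (hv1 : v1 ≤ v4) (hv2 : v2 ≤ v4) (hv3 : v3 ≤ v4) :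
    stp t1 t2 t3 t4 v1 v2 v3 v4 i ≤ v4 := by
  simp only [stp]; split_ifs <;> omega

lemma stp_last {t1 t2 t3 t4 v1 v2 v3 v4 i : ℕ} (h12 : t1 ≤ t2) (h23 : t2 ≤ t3)
    (h3 : t3 ≤ i) (h4 : i < t4) :
    stp t1 t2 t3 t4 v1 v2 v3 v4 i = v3 := by
  simp only [stp]; rw [if_neg (by omega), if_neg (by omega), if_neg (by omega), if_pos h4]

lemma digit {b d0 d1 e0 e1 : ℕ} (h0 : d0 < b) (h1 : e0 < b)
    (heq : d0 + d1 * b = e0 + e1 * b) : d0 = e0 ∧ d1 = e1 := by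
  have h2 : d1 = e1 := by
    rcases lt_trichotomy d1 e1 with hlt | he | hgt
    · exfalso
      have : d1 * b + b ≤ e1 * b := by
        calc d1 * b + b = (d1 + 1) * b := by ring
        _ ≤ e1 * b := Nat.mul_le_mul_right b (by omega)
      omega
    · exact he
    · exfalso
      have : e1 * b + b ≤ d1 * b := by
        calc e1 * b + b = (e1 + 1) * b := by ring
        _ ≤ d1 * b := Nat.mul_le_mul_right b (by omega)
      omega
  subst h2
  exact ⟨by omega, rfl⟩

lemma count4_aux {h k δ n1 n2 n3 n4 m1 m2 m3 m4 : ℕ} (hδ : δ ≤ 1) (hk : 1 ≤ k)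
    (hh : h + 1 = 2 * k + δ)
    (hs : n1 + n2 + n3 + n4 ≤ h) (hs' : m1 + m2 + m3 + m4 ≤ h)
    (d1 : n1 + n3 = m1 + m3)
    (d2 : n2 + n3 * h + n4 * (k * h + k + δ) = m2 + m3 * h + m4 * (k * h + k + δ))
    (hlt : m4 < n4) : False := by
  obtain ⟨i, hi⟩ : ∃ i, n4 = m4 + i := ⟨n4 - m4, by omega⟩
  have hi1 : 1 ≤ i := by omega
  subst hi
  have d2' : n2 + n3 * h + i * (k * h + k + δ) = m2 + m3 * h := by
    zify at d2 ⊢; linear_combination d2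
  rcases Nat.lt_or_ge i 2 with hi2 | hi2
  · -- i = 1
    have hi0 : i = 1 := by omega
    subst hi0
    rcases lt_trichotomy (n3 + k) m3 with ha | hb | hc
    · have key : n3 * h + k * h + h ≤ m3 * h := by
        calc n3 * h + k * h + h = (n3 + k + 1) * h := by ring
        _ ≤ m3 * h := Nat.mul_le_mul_right h (by omega)
      omega
    · have key : m3 * h = n3 * h + k * h := by rw [← hb]; ring
      omega
    · have key : m3 * h + h ≤ n3 * h + k * h := by
        calc m3 * h + h = (m3 + 1) * h := by ring
        _ ≤ (n3 + k) * h := Nat.mul_le_mul_right h (by omega)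
        _ = n3 * h + k * h := by ring
      omega
  · -- i ≥ 2, size contradiction
    have hW2 : 2 * (k * h + k + δ) ≤ i * (k * h + k + δ) := Nat.mul_le_mul_right _ hi2
    have hm3 : m3 * h + 2 * h ≤ h * h := by
      calc m3 * h + 2 * h = (m3 + 2) * h := by ring
      _ ≤ h * h := Nat.mul_le_mul_right h (by omega)
    have hrel : h * h + h = 2 * (k * h) + δ * h := by
      calc h * h + h = (h + 1) * h := by ring
      _ = (2 * k + δ) * h := by rw [hh]
      _ = 2 * (k * h) + δ * h := by ring
    have hδh : δ * h ≤ 1 * h := Nat.mul_le_mul_right h hδ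
    interval_cases δ <;> omega

lemma count4 {h k δ n1 n2 n3 n4 m1 m2 m3 m4 : ℕ} (hδ : δ ≤ 1) (hk : 1 ≤ k)
    (hh : h + 1 = 2 * k + δ)
    (hs : n1 + n2 + n3 + n4 ≤ h) (hs' : m1 + m2 + m3 + m4 ≤ h)
    (heq : n1 + n2 * (h + 1) + n3 * (h * (h + 1) + 1) + n4 * ((k * h + k + δ) * (h + 1))
      = m1 + m2 * (h + 1) + m3 * (h * (h + 1) + 1) + m4 * ((k * h + k + δ) * (h + 1))) :
    n1 = m1 ∧ n2 = m2 ∧ n3 = m3 ∧ n4 = m4 := by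
  have e1 : (n1 + n3) + (n2 + n3 * h + n4 * (k * h + k + δ)) * (h + 1)
      = (m1 + m3) + (m2 + m3 * h + m4 * (k * h + k + δ)) * (h + 1) := by
    zify at heq ⊢; linear_combination heq
  obtain ⟨d1, d2⟩ := digit (show n1 + n3 < h + 1 by omega) (by omega) e1
  have h44 : n4 = m4 := by
    rcases lt_trichotomy n4 m4 with hlt | he | hgt
    · exact absurd (count4_aux hδ hk hh hs' hs d1.symm d2.symm hlt) not_false
    · exact he
    · exact absurd (count4_aux hδ hk hh hs hs' d1 d2 hgt) not_false
  subst h44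
  have d2' : n2 + n3 * h = m2 + m3 * h := by omega
  have h33 : n3 = m3 := by
    rcases lt_trichotomy n3 m3 with hlt | he | hgt
    · exfalso
      have : n3 * h + h ≤ m3 * h := by
        calc n3 * h + h = (n3 + 1) * h := by ring
        _ ≤ m3 * h := Nat.mul_le_mul_right h (by omega)
      omega
    · exact he
    · exfalso
      have : m3 * h + h ≤ n3 * h := by
        calc m3 * h + h = (m3 + 1) * h := by ring
        _ ≤ n3 * h := Nat.mul_le_mul_right h (by omega)
      omega
  subst h33
  exact ⟨by omega, by omega, rfl, rfl⟩
lemma count2 {h n1 n2 m1 m2 : ℕ} (hs : n1 + n2 ≤ h) (hs' : m1 + m2 ≤ h)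
    (heq : n1 + n2 * (h + 1) = m1 + m2 * (h + 1)) : n1 = m1 ∧ n2 = m2 :=
  digit (by omega) (by omega) heq

/-- {0,1,h+1,h(h+1)+1} counts uniqueness -/
lemma count3 {h n1 n2 n3 m1 m2 m3 : ℕ} (hh : 1 ≤ h) (hs : n1 + n2 + n3 ≤ h)
    (hs' : m1 + m2 + m3 ≤ h)
    (heq : n1 + n2 * (h + 1) + n3 * (h * (h + 1) + 1)
      = m1 + m2 * (h + 1) + m3 * (h * (h + 1) + 1)) :
    n1 = m1 ∧ n2 = m2 ∧ n3 = m3 := by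
  have e1 : (n1 + n3) + (n2 + n3 * h) * (h + 1) = (m1 + m3) + (m2 + m3 * h) * (h + 1) := by
    zify at heq ⊢
    linear_combination heq
  obtain ⟨d1, d2⟩ := digit (show n1 + n3 < h + 1 by omega) (by omega) e1
  have h33 : n3 = m3 := by
    rcases lt_trichotomy n3 m3 with hlt | he | hgt
    · exfalso
      have hb : n3 * h + h ≤ m3 * h := by
        calc n3 * h + h = (n3 + 1) * h := by ring
        _ ≤ m3 * h := Nat.mul_le_mul_right h (by omega)
      omega
    · exact he
    · exfalso
      have hb : m3 * h + h ≤ n3 * h := by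
        calc m3 * h + h = (m3 + 1) * h := by ring
        _ ≤ n3 * h := Nat.mul_le_mul_right h (by omega)
      omega
  subst h33
  refine ⟨by omega, by omega, rfl⟩
lemma isBh_01b (h : ℕ) (hh : 1 ≤ h) : IsBhSet h {0, 1, h+1} := by
  intro f g hf hg mf mg hsum
  have hfS : ∀ i, f i ∈ ({0, 1, h+1} : Finset ℕ) := fun i => by
    have := hf i
    simp only [Set.mem_insert_iff, Set.mem_singleton_iff] at this
    simp only [Finset.mem_insert, Finset.mem_singleton]; tauto
  have hgS : ∀ i, g i ∈ ({0, 1, h+1} : Finset ℕ) := fun i => by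
    have := hg i
    simp only [Set.mem_insert_iff, Set.mem_singleton_iff] at this
    simp only [Finset.mem_insert, Finset.mem_singleton]; tauto
  have hexp : ∀ F : ℕ → ℕ, ∑ v ∈ ({0, 1, h+1} : Finset ℕ), F v = F 0 + F 1 + F (h+1) := by
    intro F
    rw [show ({0,1,h+1} : Finset ℕ) = insert 0 (insert 1 {h+1}) from rfl,
      Finset.sum_insert (by intro hm; simp at hm), Finset.sum_insert (by intro hm; simp at hm; try omega), Finset.sum_singleton]
    ring
  have hsf := cnt_sum _ f hfS
  have hsg := cnt_sum _ g hgS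
  have htf := cnt_total _ f hfS
  have htg := cnt_total _ g hgS
  rw [hexp] at hsf hsg htf htg
  rw [hsf, hsg] at hsum
  obtain ⟨e1, e2⟩ := count2 (h := h)
    (show cnt f 1 + cnt f (h+1) ≤ h by omega) (show cnt g 1 + cnt g (h+1) ≤ h by omega)
    (by omega)
  apply mono_eq mf mg
  intro v
  by_cases h0 : v = 0
  · subst h0; omega
  by_cases h1 : v = 1
  · subst h1; omega
  by_cases hb : v = h + 1
  · subst hb; omega
  · rw [cnt_zero hfS (by simp; omega), cnt_zero hgS (by simp; omega)]

lemma isBh_01bc (h : ℕ) (hh : 1 ≤ h) : IsBhSet h {0, 1, h+1, h*(h+1)+1} := by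
  intro f g hf hg mf mg hsum
  have hc : h + 1 < h*(h+1)+1 := by nlinarith
  have hfS : ∀ i, f i ∈ ({0, 1, h+1, h*(h+1)+1} : Finset ℕ) := fun i => by
    have := hf i
    simp only [Set.mem_insert_iff, Set.mem_singleton_iff] at this
    simp only [Finset.mem_insert, Finset.mem_singleton]; tauto
  have hgS : ∀ i, g i ∈ ({0, 1, h+1, h*(h+1)+1} : Finset ℕ) := fun i => by
    have := hg i
    simp only [Set.mem_insert_iff, Set.mem_singleton_iff] at this
    simp only [Finset.mem_insert, Finset.mem_singleton]; tauto
  have hexp : ∀ F : ℕ → ℕ, ∑ v ∈ ({0, 1, h+1, h*(h+1)+1} : Finset ℕ), F v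
      = F 0 + F 1 + F (h+1) + F (h*(h+1)+1) := by
    intro F
    rw [show ({0,1,h+1,h*(h+1)+1} : Finset ℕ)
        = insert 0 (insert 1 (insert (h+1) {h*(h+1)+1})) from rfl,
      Finset.sum_insert (by intro hm; simp at hm; try omega),
      Finset.sum_insert (by intro hm; simp at hm; try omega),
      Finset.sum_insert (by intro hm; simp at hm; try omega), Finset.sum_singleton]
    ring
  have hsf := cnt_sum _ f hfS
  have hsg := cnt_sum _ g hgS
  have htf := cnt_total _ f hfS
  have htg := cnt_total _ g hgS
  rw [hexp] at hsf hsg htf htg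
  rw [hsf, hsg] at hsum
  obtain ⟨e1, e2, e3⟩ := count3 (h := h) hh
    (show cnt f 1 + cnt f (h+1) + cnt f (h*(h+1)+1) ≤ h by omega)
    (show cnt g 1 + cnt g (h+1) + cnt g (h*(h+1)+1) ≤ h by omega)
    (by omega)
  apply mono_eq mf mg
  intro v
  by_cases h0 : v = 0
  · subst h0; omega
  by_cases h1 : v = 1
  · subst h1; omega
  by_cases hb : v = h + 1
  · subst hb; omega
  by_cases hcc : v = h*(h+1)+1
  · subst hcc; omega
  · have hnm : v ∉ ({0, 1, h+1, h*(h+1)+1} : Finset ℕ) := by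
      simp only [Finset.mem_insert, Finset.mem_singleton]; push_neg
      exact ⟨h0, h1, hb, hcc⟩
    rw [cnt_zero hfS hnm, cnt_zero hgS hnm]

lemma isBh_01bcM (h k δ : ℕ) (hδ : δ ≤ 1) (hk : 1 ≤ k) (hh : h + 1 = 2*k + δ) :
    IsBhSet h {0, 1, h+1, h*(h+1)+1, (k*h+k+δ)*(h+1)} := by
  intro f g hf hg mf mg hsum
  have hh1 : 1 ≤ h := by omega
  have hc : h + 1 < h*(h+1)+1 := by nlinarith
  have hM : h*(h+1)+1 < (k*h+k+δ)*(h+1) := by nlinarith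
  have hfS : ∀ i, f i ∈ ({0, 1, h+1, h*(h+1)+1, (k*h+k+δ)*(h+1)} : Finset ℕ) := fun i => by
    have := hf i
    simp only [Set.mem_insert_iff, Set.mem_singleton_iff] at this
    simp only [Finset.mem_insert, Finset.mem_singleton]; tauto
  have hgS : ∀ i, g i ∈ ({0, 1, h+1, h*(h+1)+1, (k*h+k+δ)*(h+1)} : Finset ℕ) := fun i => by
    have := hg i
    simp only [Set.mem_insert_iff, Set.mem_singleton_iff] at this
    simp only [Finset.mem_insert, Finset.mem_singleton]; tauto
  have hkh : k ≤ k * h := Nat.le_mul_of_pos_right k (by omega)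
  have hexp : ∀ F : ℕ → ℕ, ∑ v ∈ ({0, 1, h+1, h*(h+1)+1, (k*h+k+δ)*(h+1)} : Finset ℕ), F v
      = F 0 + F 1 + F (h+1) + F (h*(h+1)+1) + F ((k*h+k+δ)*(h+1)) := by
    intro F
    rw [show ({0,1,h+1,h*(h+1)+1,(k*h+k+δ)*(h+1)} : Finset ℕ)
        = insert 0 (insert 1 (insert (h+1) (insert (h*(h+1)+1) {(k*h+k+δ)*(h+1)}))) from rfl,
      Finset.sum_insert (by intro hm; simp at hm; try omega),
      Finset.sum_insert (by intro hm; simp at hm; try omega),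
      Finset.sum_insert (by intro hm; simp at hm; try omega),
      Finset.sum_insert (by intro hm; simp at hm; try omega), Finset.sum_singleton]
    ring
  have hsf := cnt_sum _ f hfS
  have hsg := cnt_sum _ g hgS
  have htf := cnt_total _ f hfS
  have htg := cnt_total _ g hgS
  rw [hexp] at hsf hsg htf htg
  rw [hsf, hsg] at hsum
  obtain ⟨e1, e2, e3, e4⟩ := count4 (h := h) hδ hk hh
    (show cnt f 1 + cnt f (h+1) + cnt f (h*(h+1)+1) + cnt f ((k*h+k+δ)*(h+1)) ≤ h by omega)
    (show cnt g 1 + cnt g (h+1) + cnt g (h*(h+1)+1) + cnt g ((k*h+k+δ)*(h+1)) ≤ h by omega)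
    (by omega)
  apply mono_eq mf mg
  intro v
  by_cases h0 : v = 0
  · subst h0; omega
  by_cases h1 : v = 1
  · subst h1; omega
  by_cases hb : v = h + 1
  · subst hb; omega
  by_cases hcc : v = h*(h+1)+1
  · subst hcc; omega
  by_cases hMM : v = (k*h+k+δ)*(h+1)
  · subst hMM; omega
  · have hnm : v ∉ ({0, 1, h+1, h*(h+1)+1, (k*h+k+δ)*(h+1)} : Finset ℕ) := by
      simp only [Finset.mem_insert, Finset.mem_singleton]; push_neg
      exact ⟨h0, h1, hb, hcc, hMM⟩
    rw [cnt_zero hfS hnm, cnt_zero hgS hnm]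

lemma collision {h : ℕ} {A : Set ℕ} (f g : Fin h → ℕ) (hf : ∀ i, f i ∈ A)
    (hg : ∀ i, g i ∈ A) (mf : Monotone f) (mg : Monotone g)
    (hsum : ∑ i, f i = ∑ i, g i) (hne : f ≠ g) : ¬ IsBhSet h A :=
  fun H => hne (H f g hf hg mf mg hsum)

/-- generic collision witness: x ones, y copies of (h+1), one copy of m  versus
    x' ones, y' copies of (h+1), z' copies of h(h+1)+1 -/
lemma N4wit {h m : ℕ} (hh1 : 1 ≤ h) (x y x' y' z' : ℕ)
    (hb1 : x + y ≤ h - 1) (hb2 : x' + y' + z' ≤ h)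
    (hcm : h*(h+1)+1 < m)
    (heq : x + y*(h+1) + m = x' + y'*(h+1) + z'*(h*(h+1)+1)) :
    ¬ IsBhSet h (insert m ({0, 1, h+1, h*(h+1)+1} : Set ℕ)) := by
  have hbc : h + 1 < h*(h+1)+1 := by nlinarith
  set b := h + 1 with hbdef
  set c := h*(h+1)+1 with hcdef
  -- f : zeros, x ones, y b's, one m
  set f : Fin h → ℕ := fun i => stp (h-1-x-y) (h-1-y) (h-1) h 1 b m m (i : ℕ) with hfdef
  -- g : zeros, x' ones, y' b's, z' c's
  set g : Fin h → ℕ := fun i => stp (h-x'-y'-z') (h-y'-z') (h-z') h 1 b c c (i : ℕ) with hgdef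
  apply collision f g
  · intro i
    rcases stp_mem (t1 := h-1-x-y) (t2 := h-1-y) (t3 := h-1) (t4 := h) (v1 := 1) (v2 := b)
      (v3 := m) (v4 := m) (i := (i:ℕ)) with hv | hv | hv | hv | hv <;>
      simp only [hfdef, hv] <;> simp [Set.mem_insert_iff]
  · intro i
    rcases stp_mem (t1 := h-x'-y'-z') (t2 := h-y'-z') (t3 := h-z') (t4 := h) (v1 := 1)
      (v2 := b) (v3 := c) (v4 := c) (i := (i:ℕ)) with hv | hv | hv | hv | hv <;>
      simp only [hgdef, hv] <;> simp [Set.mem_insert_iff]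
  · exact stp_mono _ _ _ _ _ _ _ _ (by omega) (by omega) (by omega) (by omega) (by omega)
      (by omega)
  · exact stp_mono _ _ _ _ _ _ _ _ (by omega) (by omega) (by omega) (by omega) (by omega)
      (by omega)
  · rw [hfdef, hgdef]
    rw [stp_sum _ _ _ _ _ _ _ _ (by omega) (by omega) (by omega) (by omega),
      stp_sum _ _ _ _ _ _ _ _ (by omega) (by omega) (by omega) (by omega)]
    have e1 : h-1-y - (h-1-x-y) = x := by omega
    have e2 : h-1 - (h-1-y) = y := by omega
    have e3 : h - (h-1) = 1 := by omega
    have e4 : h - h = 0 := by omega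
    have e5 : h-y'-z' - (h-x'-y'-z') = x' := by omega
    have e6 : h-z' - (h-y'-z') = y' := by omega
    have e7 : h - (h-z') = z' := by omega
    rw [e1, e2, e3, e4, e5, e6, e7]
    omega
  · intro hfg
    have := congrFun hfg ⟨h-1, by omega⟩
    simp only [hfdef, hgdef] at this
    have hl : stp (h-1-x-y) (h-1-y) (h-1) h 1 b m m (h-1) = m :=
      stp_last (by omega) (by omega) (by omega) (by omega)
    have hr : stp (h-x'-y'-z') (h-y'-z') (h-z') h 1 b c c (h-1) ≤ c :=
      stp_le (by omega) (by omega) (by omega)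
    omega

/-- collision witness for the 3-element stage: x ones and one m versus
    x' ones and y' copies of (h+1) -/
lemma N3wit {h m : ℕ} (hh1 : 1 ≤ h) (x x' y' : ℕ)
    (hb1 : x ≤ h - 1) (hb2 : x' + y' ≤ h) (hcm : h + 1 < m)
    (heq : x + m = x' + y'*(h+1)) :
    ¬ IsBhSet h (insert m ({0, 1, h+1} : Set ℕ)) := by
  set b := h + 1 with hbdef
  set f : Fin h → ℕ := fun i => stp (h-1-x) (h-1) (h-1) h 1 1 m m (i : ℕ) with hfdef
  set g : Fin h → ℕ := fun i => stp (h-x'-y') (h-y') h h 1 b b b (i : ℕ) with hgdef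
  apply collision f g
  · intro i
    rcases stp_mem (t1 := h-1-x) (t2 := h-1) (t3 := h-1) (t4 := h) (v1 := 1) (v2 := 1)
      (v3 := m) (v4 := m) (i := (i:ℕ)) with hv | hv | hv | hv | hv <;>
      simp only [hfdef, hv] <;> simp [Set.mem_insert_iff]
  · intro i
    rcases stp_mem (t1 := h-x'-y') (t2 := h-y') (t3 := h) (t4 := h) (v1 := 1)
      (v2 := b) (v3 := b) (v4 := b) (i := (i:ℕ)) with hv | hv | hv | hv | hv <;>
      simp only [hgdef, hv] <;> simp [Set.mem_insert_iff]
  · exact stp_mono _ _ _ _ _ _ _ _ (by omega) (by omega) (by omega) (by omega) (by omega)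
      (by omega)
  · exact stp_mono _ _ _ _ _ _ _ _ (by omega) (by omega) (by omega) (by omega) (by omega)
      (by omega)
  · rw [hfdef, hgdef]
    rw [stp_sum _ _ _ _ _ _ _ _ (by omega) (by omega) (by omega) (by omega),
      stp_sum _ _ _ _ _ _ _ _ (by omega) (by omega) (by omega) (by omega)]
    have e1 : h-1 - (h-1-x) = x := by omega
    have e2 : h-1 - (h-1) = 0 := by omega
    have e3 : h - (h-1) = 1 := by omega
    have e4 : h - h = 0 := by omega
    have e5 : h-y' - (h-x'-y') = x' := by omega
    have e6 : h - (h-y') = y' := by omega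
    rw [e1, e2, e3, e4, e5, e6]
    omega
  · intro hfg
    have := congrFun hfg ⟨h-1, by omega⟩
    simp only [hfdef, hgdef] at this
    have hl : stp (h-1-x) (h-1) (h-1) h 1 1 m m (h-1) = m :=
      stp_last (by omega) (by omega) (by omega) (by omega)
    have hr : stp (h-x'-y') (h-y') h h 1 b b b (h-1) ≤ b :=
      stp_le (by omega) (by omega) (by omega)
    omega

lemma notBh_stage2 (h m : ℕ) (hm1 : 1 < m) (hm2 : m < h + 1) :
    ¬ IsBhSet h (insert m ({0, 1} : Set ℕ)) := by
  have hh1 : 1 ≤ h := by omega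
  set f : Fin h → ℕ := fun i => stp (h-1) (h-1) (h-1) h 1 1 m m (i : ℕ) with hfdef
  set g : Fin h → ℕ := fun i => stp (h-m) h h h 1 1 1 1 (i : ℕ) with hgdef
  apply collision f g
  · intro i
    rcases stp_mem (t1 := h-1) (t2 := h-1) (t3 := h-1) (t4 := h) (v1 := 1) (v2 := 1)
      (v3 := m) (v4 := m) (i := (i:ℕ)) with hv | hv | hv | hv | hv <;>
      simp only [hfdef, hv] <;> simp [Set.mem_insert_iff]
  · intro i
    rcases stp_mem (t1 := h-m) (t2 := h) (t3 := h) (t4 := h) (v1 := 1) (v2 := 1)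
      (v3 := 1) (v4 := 1) (i := (i:ℕ)) with hv | hv | hv | hv | hv <;>
      simp only [hgdef, hv] <;> simp [Set.mem_insert_iff]
  · exact stp_mono _ _ _ _ _ _ _ _ (by omega) (by omega) (by omega) (by omega) (by omega)
      (by omega)
  · exact stp_mono _ _ _ _ _ _ _ _ (by omega) (by omega) (by omega) (by omega) (by omega)
      (by omega)
  · rw [hfdef, hgdef]
    rw [stp_sum _ _ _ _ _ _ _ _ (by omega) (by omega) (by omega) (by omega),
      stp_sum _ _ _ _ _ _ _ _ (by omega) (by omega) (by omega) (by omega)]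
    have e1 : h-1 - (h-1) = 0 := by omega
    have e2 : h - (h-1) = 1 := by omega
    have e3 : h - h = 0 := by omega
    have e4 : h - (h-m) = m := by omega
    rw [e1, e2, e3, e4]
    omega
  · intro hfg
    have := congrFun hfg ⟨h-1, by omega⟩
    simp only [hfdef, hgdef] at this
    have hl : stp (h-1) (h-1) (h-1) h 1 1 m m (h-1) = m :=
      stp_last (by omega) (by omega) (by omega) (by omega)
    have hr : stp (h-m) h h h 1 1 1 1 (h-1) ≤ 1 :=
      stp_le (by omega) (by omega) (by omega)
    omega

lemma notBh_stage3 (h m : ℕ) (hm1 : h + 1 < m) (hm2 : m < h*(h+1)+1) :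
    ¬ IsBhSet h (insert m ({0, 1, h+1} : Set ℕ)) := by
  have hh1 : 1 ≤ h := by
    by_contra hcon
    have : h = 0 := by omega
    subst this
    omega
  set q := m / (h+1) with hqdef
  set r := m % (h+1) with hrdef
  have hdm : (h+1) * q + r = m := Nat.div_add_mod m (h+1)
  have hr : r < h + 1 := Nat.mod_lt m (by omega)
  have hq1 : 1 ≤ q := by
    rcases Nat.eq_zero_or_pos q with h0 | h1
    · rw [h0] at hdm; omega
    · exact h1
  have hqh : q ≤ h := by
    by_contra hcon
    have : (h+1)*(h+1) ≤ (h+1)*q := Nat.mul_le_mul_left _ (by omega)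
    have e : (h+1)*(h+1) = h*(h+1) + (h+1) := by ring
    omega
  have hcomm : q*(h+1) = (h+1)*q := Nat.mul_comm _ _
  by_cases hcase : q + r ≤ h
  · exact N3wit hh1 0 r q (by omega) (by omega) hm1 (by omega)
  · -- q + r ≥ h + 1 : then q ≤ h-1 and r ≥ 2
    have hqh' : q ≤ h - 1 := by
      by_contra hcon
      have hqeq : q = h := by omega
      rw [hqeq] at hdm
      have hcomm2 : (h+1)*h = h*(h+1) := Nat.mul_comm _ _
      omega
    have hr2 : 2 ≤ r := by omega
    have hex : (q+1)*(h+1) = q*(h+1) + (h+1) := by ring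
    exact N3wit hh1 (h+1-r) 0 (q+1) (by omega) (by omega) hm1 (by omega)

lemma notBh_stage4 (h k δ m : ℕ) (hδ : δ ≤ 1) (hk : 1 ≤ k) (hh : h + 1 = 2*k + δ)
    (hm1 : h*(h+1)+1 < m) (hm2 : m < (k*h+k+δ)*(h+1)) :
    ¬ IsBhSet h (insert m ({0, 1, h+1, h*(h+1)+1} : Set ℕ)) := by
  have hh1 : 1 ≤ h := by omega
  -- dispose of h = 1
  by_cases hone : h = 1
  · exfalso
    subst hone
    have hk1 : k = 1 := by omega
    have hδ0 : δ = 0 := by omega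
    subst hk1; subst hδ0
    norm_num at hm1 hm2
    omega
  have hh2 : 2 ≤ h := by omega
  obtain ⟨μ, ρ, hdm, hρ⟩ : ∃ μ ρ, (h+1) * μ + ρ = m ∧ ρ < h + 1 :=
    ⟨m / (h+1), m % (h+1), Nat.div_add_mod m (h+1), Nat.mod_lt m (by omega)⟩
  obtain ⟨q, s, hdμ, hs⟩ : ∃ q s, h * q + s = μ ∧ s < h :=
    ⟨μ / h, μ % h, Nat.div_add_mod μ h, Nat.mod_lt μ (by omega)⟩
  -- μ < W
  have hμW : μ + 1 ≤ k*h + k + δ := by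
    by_contra hcon
    have h1 : (h+1)*(k*h+k+δ) ≤ (h+1)*μ := Nat.mul_le_mul_left _ (by omega)
    have h2 : (h+1)*(k*h+k+δ) = (k*h+k+δ)*(h+1) := Nat.mul_comm _ _
    omega
  -- μ ≥ h
  have hμh : h ≤ μ := by
    by_contra hcon
    have h1 : (h+1)*μ ≤ (h+1)*(h-1) := Nat.mul_le_mul_left _ (by omega)
    have h2 : (h+1)*(h-1) + (h+1) = (h+1)*h := by
      rw [← Nat.mul_succ]
      congr 1
      omega
    have h3 : (h+1)*h = h*(h+1) := Nat.mul_comm _ _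
    omega
  -- q + 1 ≤ h
  have hrel : 2*(k*h) + δ*h = h*h + h := by
    have : (2*k+δ)*h = (h+1)*h := by rw [hh]
    calc 2*(k*h) + δ*h = (2*k+δ)*h := by ring
    _ = (h+1)*h := this
    _ = h*h + h := by ring
  have hδh : δ*h ≤ 1*h := Nat.mul_le_mul_right h hδ
  have hδh2 : δ*2 ≤ δ*h := Nat.mul_le_mul_left δ hh2
  have hhh : h*2 ≤ h*h := Nat.mul_le_mul_left h hh2
  have hqh : q + 1 ≤ h := by
    by_contra hcon
    have h1 : h*h ≤ h*q := Nat.mul_le_mul_left h (by omega)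
    omega
  -- case analysis
  by_cases hcase1 : q < ρ
  · by_cases hcase2 : ρ + s ≤ h
    · -- C2 : m = (ρ-q) + s*(h+1) + q*c
      refine N4wit hh1 0 0 (ρ-q) s q (by omega) (by omega) hm1 ?_
      zify [show q ≤ ρ from by omega]
      have hm3 : m = (h+1)*(h*q+s) + ρ := by rw [hdμ]; omega
      have hm3' : (m:ℤ) = ((h:ℤ)+1)*((h:ℤ)*q+s) + ρ := by exact_mod_cast hm3
      linear_combination hm3'
    · -- C4 : (h-s)*(h+1) + m = (ρ-q-1) + (q+1)*c
      have hs1 : 1 ≤ s := by omega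
      refine N4wit hh1 0 (h-s) (ρ-q-1) 0 (q+1) (by omega) (by omega) hm1 ?_
      zify [show q ≤ ρ from by omega, show 1 ≤ ρ - q from by omega, show s ≤ h from by omega]
      have hm3 : m = (h+1)*(h*q+s) + ρ := by rw [hdμ]; omega
      have hm3' : (m:ℤ) = ((h:ℤ)+1)*((h:ℤ)*q+s) + ρ := by exact_mod_cast hm3
      linear_combination hm3'
  · by_cases hcase2 : q + s ≤ h
    · -- C1 : (q-ρ) + m = s*(h+1) + q*c
      refine N4wit hh1 (q-ρ) 0 0 s q (by omega) (by omega) hm1 ?_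
      zify [show ρ ≤ q from by omega]
      have hm3 : m = (h+1)*(h*q+s) + ρ := by rw [hdμ]; omega
      have hm3' : (m:ℤ) = ((h:ℤ)+1)*((h:ℤ)*q+s) + ρ := by exact_mod_cast hm3
      linear_combination hm3'
    · -- C3 : (q+1-ρ) + (h-s)*(h+1) + m = (q+1)*c, needs ρ + s ≥ q + 2
      have hkey : q + 2 ≤ ρ + s := by
        by_contra hC
        -- boundary emptiness argument
        have hqk : k ≤ q := by omega
        have e1 : q*(h-1) + q = q*h := by
          rw [← Nat.mul_succ]
          congr 1
          omega
        have e2 : k*(h-1) + k = k*h := by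
          rw [← Nat.mul_succ]
          congr 1
          omega
        have key : k*(h-1) ≤ q*(h-1) := Nat.mul_le_mul_right _ hqk
        have hcomm : h*q = q*h := Nat.mul_comm _ _
        omega
      refine N4wit hh1 (q+1-ρ) (h-s) 0 0 (q+1) (by omega) (by omega) hm1 ?_
      zify [show ρ ≤ q + 1 from by omega, show s ≤ h from by omega]
      have hm3 : m = (h+1)*(h*q+s) + ρ := by rw [hdμ]; omega
      have hm3' : (m:ℤ) = ((h:ℤ)+1)*((h:ℤ)*q+s) + ρ := by exact_mod_cast hm3
      linear_combination hm3'

lemma greedy_step {h : ℕ} (a : ℕ → ℕ) (k m0 : ℕ)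
    (hg : a (k+1) = sInf {m : ℕ | a k < m ∧ IsBhSet h (insert m (a '' Set.Iic k))})
    (h1 : a k < m0) (h2 : IsBhSet h (insert m0 (a '' Set.Iic k)))
    (h3 : ∀ m, a k < m → m < m0 → ¬ IsBhSet h (insert m (a '' Set.Iic k))) :
    a (k+1) = m0 := by
  rw [hg]
  have hne : {m : ℕ | a k < m ∧ IsBhSet h (insert m (a '' Set.Iic k))}.Nonempty := ⟨m0, h1, h2⟩
  have hmem := Nat.sInf_mem hne
  have hle : sInf {m : ℕ | a k < m ∧ IsBhSet h (insert m (a '' Set.Iic k))} ≤ m0 :=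
    Nat.sInf_le ⟨h1, h2⟩
  rcases lt_or_eq_of_le hle with hlt | heq
  · exact absurd hmem.2 (h3 _ hmem.1 hlt)
  · exact heq

/-- Nathanson–O'Bryant: for the greedy B_h-set, a₄(h) = (h+1)³/2 for odd h and
(h³+2h²+3h+2)/2 for even h. -/
theorem greedy_Bh_a4 (h : ℕ) (hh : 1 ≤ h) (a : ℕ → ℕ)
    (h0 : a 0 = 0) (h1 : a 1 = 1)
    (hgreedy : ∀ k : ℕ, 1 ≤ k →
      a (k + 1) = sInf {m : ℕ | a k < m ∧ IsBhSet h (insert m (a '' Set.Iic k))}) :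
    (Odd h → 2 * a 4 = (h + 1) ^ 3) ∧
    (Even h → 2 * a 4 = h ^ 3 + 2 * h ^ 2 + 3 * h + 2) := by
  have key : ∀ k δ : ℕ, δ ≤ 1 → 1 ≤ k → h + 1 = 2*k + δ → a 4 = (k*h+k+δ)*(h+1) := by
    intro k δ hδ hk hhkδ
    have hbc : h + 1 < h*(h+1)+1 := by nlinarith
    -- stage 2
    have himg1 : a '' Set.Iic 1 = ({0, 1} : Set ℕ) := by
      ext x
      simp only [Set.mem_image, Set.mem_Iic, Set.mem_insert_iff, Set.mem_singleton_iff]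
      constructor
      · rintro ⟨n, hn, rfl⟩
        interval_cases n
        · left; exact h0
        · right; exact h1
      · rintro (rfl | rfl)
        exacts [⟨0, by omega, h0⟩, ⟨1, by omega, h1⟩]
    have ha2 : a 2 = h + 1 := by
      refine greedy_step a 1 (h+1) (hgreedy 1 le_rfl) (by omega) ?_ ?_
      · rw [himg1]
        have : insert (h+1) ({0,1} : Set ℕ) = ({0,1,h+1} : Set ℕ) := by
          ext x
          simp only [Set.mem_insert_iff, Set.mem_singleton_iff]
          tauto
        rw [this]
        exact isBh_01b h hh
      · intro m hm1 hm2
        rw [himg1]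
        exact notBh_stage2 h m (by omega) hm2
    -- stage 3
    have himg2 : a '' Set.Iic 2 = ({0, 1, h+1} : Set ℕ) := by
      ext x
      simp only [Set.mem_image, Set.mem_Iic, Set.mem_insert_iff, Set.mem_singleton_iff]
      constructor
      · rintro ⟨n, hn, rfl⟩
        interval_cases n
        · left; exact h0
        · right; left; exact h1
        · right; right; exact ha2
      · rintro (rfl | rfl | rfl)
        exacts [⟨0, by omega, h0⟩, ⟨1, by omega, h1⟩, ⟨2, by omega, ha2⟩]
    have ha3 : a 3 = h*(h+1) + 1 := by
      refine greedy_step a 2 (h*(h+1)+1) (hgreedy 2 (by omega)) (by omega) ?_ ?_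
      · rw [himg2]
        have : insert (h*(h+1)+1) ({0,1,h+1} : Set ℕ) = ({0,1,h+1,h*(h+1)+1} : Set ℕ) := by
          ext x
          simp only [Set.mem_insert_iff, Set.mem_singleton_iff]
          tauto
        rw [this]
        exact isBh_01bc h hh
      · intro m hm1 hm2
        rw [himg2]
        exact notBh_stage3 h m (by omega) hm2
    -- stage 4
    have hcM : h*(h+1)+1 < (k*h+k+δ)*(h+1) := by nlinarith
    have himg3 : a '' Set.Iic 3 = ({0, 1, h+1, h*(h+1)+1} : Set ℕ) := by
      ext x
      simp only [Set.mem_image, Set.mem_Iic, Set.mem_insert_iff, Set.mem_singleton_iff]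
      constructor
      · rintro ⟨n, hn, rfl⟩
        interval_cases n
        · left; exact h0
        · right; left; exact h1
        · right; right; left; exact ha2
        · right; right; right; exact ha3
      · rintro (rfl | rfl | rfl | rfl)
        exacts [⟨0, by omega, h0⟩, ⟨1, by omega, h1⟩, ⟨2, by omega, ha2⟩, ⟨3, by omega, ha3⟩]
    refine greedy_step a 3 ((k*h+k+δ)*(h+1)) (hgreedy 3 (by omega)) (by omega) ?_ ?_
    · rw [himg3]
      have : insert ((k*h+k+δ)*(h+1)) ({0,1,h+1,h*(h+1)+1} : Set ℕ)
          = ({0,1,h+1,h*(h+1)+1,(k*h+k+δ)*(h+1)} : Set ℕ) := by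
        ext x
        simp only [Set.mem_insert_iff, Set.mem_singleton_iff]
        tauto
      rw [this]
      exact isBh_01bcM h k δ hδ hk hhkδ
    · intro m hm1 hm2
      rw [himg3]
      exact notBh_stage4 h k δ m hδ hk hhkδ (by omega) hm2
  constructor
  · rintro ⟨t, rfl⟩
    have ha4 := key (t+1) 0 (by omega) (by omega) (by ring)
    rw [ha4]
    ring
  · rintro ⟨t, rfl⟩
    have ht : 1 ≤ t := by omega
    have ha4 := key t 1 (by omega) (by omega) (by ring)
    rw [ha4]
    ring
end

section
/- Let φ(x₁,…,x_h) = c₁x₁ + ⋯ + c_hx_h be a linear form with coefficients in a field F, and suppose there exist disjoint subsets I₁, I₂ of {1,…,h}, not both empty, with Σ_{i∈I₁} cᵢ = Σ_{i∈I₂} cᵢ. Then no subset A of a vector space V over F with |A| ≥ 2 is a φ-Sidon set. -/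
/-!
Pick `u ≠ v` in `A` and send the indices in `I₁` (resp. `I₂`) to `u` and all others to `v`.
Both tuples have image `(∑_{I} cᵢ) • (u - v) + (∑ cᵢ) • v`, which is the same for `I = I₁, I₂`,
yet the tuples differ at any index of `I₁ ∪ I₂`, by disjointness.
-/

open Finset

theorem Finset.sum_smul_ite_mem {ι R M : Type*} [Fintype ι] [DecidableEq ι] [Ring R] [AddCommGroup M]
    [Module R M] (c : ι → R) (I : Finset ι) (u v : M) :
    ∑ i, c i • (if i ∈ I then u else v) = (∑ i ∈ I, c i) • (u - v) + (∑ i, c i) • v := by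
  have hsplit (i : ι) :
      c i • (if i ∈ I then u else v) = (if i ∈ I then c i • (u - v) else 0) + c i • v := by
    split <;> simp [smul_sub]
  simp only [hsplit, sum_add_distrib, sum_ite_mem, univ_inter, ← sum_smul]

theorem Finset.ite_mem_ne_ite_mem_of_disjoint {ι α : Type*} [DecidableEq ι] {I₁ I₂ : Finset ι}
    (hdisj : Disjoint I₁ I₂) (hne : (I₁ ∪ I₂).Nonempty) {u v : α} (huv : u ≠ v) :
    (fun i => if i ∈ I₁ then u else v) ≠ (fun i => if i ∈ I₂ then u else v) := by
  obtain ⟨j, hj⟩ := hne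
  intro heq
  have hj_eq := congrFun heq j
  rcases mem_union.mp hj with hj₁ | hj₂
  · simp only [hj₁, disjoint_left.mp hdisj hj₁, if_true, if_false] at hj_eq
    exact huv hj_eq
  · simp only [hj₂, disjoint_right.mp hdisj hj₂, if_true, if_false] at hj_eq
    exact huv hj_eq.symm

/-- If the coefficients of a linear form φ admit two disjoint, not both empty, index sets
with equal coefficient sums, then no subset of a vector space with at least two elements
is a φ-Sidon set. -/
theorem no_sidon_of_not_propertyN (F : Type*) [Field F] (V : Type*) [AddCommGroup V]
    [Module F V] (h : ℕ) (c : Fin h → F)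
    (hobstruct : ∃ I₁ I₂ : Finset (Fin h), Disjoint I₁ I₂ ∧ (I₁ ∪ I₂).Nonempty ∧
      ∑ i ∈ I₁, c i = ∑ i ∈ I₂, c i)
    (A : Set V) (hA : ∃ u ∈ A, ∃ v ∈ A, u ≠ v) :
    ¬ (∀ f g : Fin h → V, (∀ i, f i ∈ A) → (∀ i, g i ∈ A) →
        ∑ i, c i • f i = ∑ i, c i • g i → f = g) := by
  obtain ⟨I₁, I₂, hdisj, hne, hsum⟩ := hobstruct
  obtain ⟨u, hu, v, hv, huv⟩ := hA
  intro hsidon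
  refine ite_mem_ne_ite_mem_of_disjoint hdisj hne huv (hsidon _ _ ?_ ?_ ?_)
  · intro i; split <;> assumption
  · intro i; split <;> assumption
  · rw [sum_smul_ite_mem, sum_smul_ite_mem, hsum]
end

section
/- Let F be a field, V an infinite vector space over F, X an infinite subset of V, and φ(x₁,…,x_h) = Σ cᵢxᵢ a linear form with nonzero coefficients in F. Then the following are equivalent: (i) X contains an infinite φ-Sidon set, (ii) X contains a φ-Sidon set with at least 2 elements, (iii) φ has property N. -/
/-- A is a Sidon set for the linear form with coefficients c. -/
def IsPhiSidon {F V : Type*} [Field F] [AddCommGroup V] [Module F V] {h : ℕ}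
    (c : Fin h → F) (A : Set V) : Prop :=
  ∀ f g : Fin h → V, (∀ i, f i ∈ A) → (∀ i, g i ∈ A) →
    ∑ i, c i • f i = ∑ i, c i • g i → f = g

/-- Property N: no two disjoint index sets, not both empty, have equal coefficient sums. -/
def PropertyN {F : Type*} [Field F] {h : ℕ} (c : Fin h → F) : Prop :=
  ¬ ∃ I₁ I₂ : Finset (Fin h), Disjoint I₁ I₂ ∧ (I₁ ∪ I₂).Nonempty ∧
      ∑ i ∈ I₁, c i = ∑ i ∈ I₂, c i

section Aux

variable {F V : Type*} [Field F] [AddCommGroup V] [Module F V] {h : ℕ} {c : Fin h → F}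

lemma isPhiSidon_mono {A B : Set V} (hAB : A ⊆ B) (hB : IsPhiSidon c B) :
    IsPhiSidon c A :=
  fun f g hf hg heq => hB f g (fun i => hAB (hf i)) (fun i => hAB (hg i)) heq

lemma propertyN_of_pair {a b : V} (hab : a ≠ b)
    (hS : IsPhiSidon c {a, b}) : PropertyN c := by
  rintro ⟨I, J, hdisj, hne, hsum⟩
  classical
  have decomp : ∀ (K : Finset (Fin h)),
      ∑ i, c i • (if i ∈ K then a else b) =
        ∑ i, c i • b + (∑ i ∈ K, c i) • (a - b) := by
    intro K
    have hK : K = Finset.univ.filter (· ∈ K) := by ext i; simp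
    rw [hK, Finset.sum_smul, Finset.sum_filter, ← Finset.sum_add_distrib]
    apply Finset.sum_congr rfl
    intro i _
    by_cases hi : i ∈ K
    · simp only [Finset.mem_filter, Finset.mem_univ, true_and, hi, if_true]
      rw [smul_sub]; abel
    · simp [hi]
  have hsums : ∑ i, c i • (if i ∈ I then a else b) =
      ∑ i, c i • (if i ∈ J then a else b) := by
    rw [decomp I, decomp J, hsum]
  have hfg := hS (fun i => if i ∈ I then a else b) (fun i => if i ∈ J then a else b)
    (fun i => by by_cases hi : i ∈ I <;> simp [hi])
    (fun i => by by_cases hi : i ∈ J <;> simp [hi]) hsums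
  obtain ⟨i, hi⟩ := hne
  rcases Finset.mem_union.1 hi with hiI | hiJ
  · have hiJ : i ∉ J := fun hj => (Finset.disjoint_left.1 hdisj hiI) hj
    have := congrFun hfg i
    simp only [hiI, hiJ, if_pos, if_neg, if_true, if_false] at this
    exact hab this
  · have hiI : i ∉ I := fun hj => (Finset.disjoint_right.1 hdisj hiJ) hj
    have := congrFun hfg i
    simp only [hiI, hiJ, if_pos, if_neg, if_true, if_false] at this
    exact hab this.symm

lemma sidon_extend {X : Set V} (hX : X.Infinite) (hN : PropertyN c)
    (A : Finset V) (hA : IsPhiSidon c (↑A : Set V)) :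
    ∃ x, (x ∈ X ∧ x ∉ A) ∧ IsPhiSidon c (insert x (↑A : Set V)) := by
  classical
  rcases A.eq_empty_or_nonempty with rfl | ⟨a₀, ha₀⟩
  · obtain ⟨x, hx⟩ := hX.nonempty
    refine ⟨x, ⟨hx, by simp⟩, ?_⟩
    intro f g hf hg _
    funext i
    have h1 : f i = x := by simpa using hf i
    have h2 : g i = x := by simpa using hg i
    rw [h1, h2]
  · -- the finite set of "bad" elements
    set Bad : Finset V := Finset.image
      (fun p : (Fin h → A) × (Fin h → A) × Finset (Fin h) × Finset (Fin h) =>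
        (∑ i ∈ p.2.2.1, c i - ∑ i ∈ p.2.2.2, c i)⁻¹ •
          (∑ i, c i • (p.2.1 i : V) - ∑ i, c i • (p.1 i : V)) + a₀)
      Finset.univ with hBad
    have hinf : (X \ ↑(Bad ∪ A)).Infinite := hX.diff (Finset.finite_toSet _)
    obtain ⟨x, hxX, hxBA⟩ := hinf.nonempty
    rw [Finset.coe_union, Set.mem_union] at hxBA
    push_neg at hxBA
    have hxB : x ∉ Bad := fun hh => hxBA.1 hh
    have hxA : x ∉ A := fun hh => hxBA.2 hh
    refine ⟨x, ⟨hxX, hxA⟩, ?_⟩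
    intro f g hf hg heq
    have hf'A : ∀ i, (if f i = x then a₀ else f i) ∈ A := by
      intro i
      by_cases hi : f i = x
      · simpa [hi] using ha₀
      · rcases Set.mem_insert_iff.1 (hf i) with h1 | h1
        · exact absurd h1 hi
        · simpa [hi] using h1
    have hg'A : ∀ i, (if g i = x then a₀ else g i) ∈ A := by
      intro i
      by_cases hi : g i = x
      · simpa [hi] using ha₀
      · rcases Set.mem_insert_iff.1 (hg i) with h1 | h1
        · exact absurd h1 hi
        · simpa [hi] using h1
    have decomp : ∀ (p : Fin h → V),
        ∑ i, c i • p i =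
          ∑ i, c i • (if p i = x then a₀ else p i) +
            (∑ i ∈ Finset.univ.filter (fun i => p i = x), c i) • (x - a₀) := by
      intro p
      rw [Finset.sum_smul, Finset.sum_filter, ← Finset.sum_add_distrib]
      apply Finset.sum_congr rfl
      intro i _
      by_cases hi : p i = x
      · simp only [hi, if_pos]
        rw [smul_sub]; abel
      · simp [hi]
    have E : ∑ i, c i • (if f i = x then a₀ else f i) +
          (∑ i ∈ Finset.univ.filter (fun i => f i = x), c i) • (x - a₀) =
        ∑ i, c i • (if g i = x then a₀ else g i) +
          (∑ i ∈ Finset.univ.filter (fun i => g i = x), c i) • (x - a₀) := by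
      rw [← decomp f, ← decomp g, heq]
    by_cases hs : ∑ i ∈ Finset.univ.filter (fun i => f i = x), c i =
        ∑ i ∈ Finset.univ.filter (fun i => g i = x), c i
    · -- coefficient of x vanishes; use Property N and Sidon property of A
      have hIfIg : Finset.univ.filter (fun i => f i = x) =
          Finset.univ.filter (fun i => g i = x) := by
        set If := Finset.univ.filter (fun i => f i = x) with hIf
        set Ig := Finset.univ.filter (fun i => g i = x) with hIg
        by_contra hne'
        have hd : Disjoint (If \ Ig) (Ig \ If) := disjoint_sdiff_sdiff
        have hsum2 : ∑ i ∈ If \ Ig, c i = ∑ i ∈ Ig \ If, c i := by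
          have t1 := Finset.sum_inter_add_sum_sdiff If Ig (fun i => c i)
          have t2 := Finset.sum_inter_add_sum_sdiff Ig If (fun i => c i)
          rw [Finset.inter_comm] at t2
          exact add_left_cancel (t1.trans (hs.trans t2.symm))
        have hun : ¬ ((If \ Ig) ∪ (Ig \ If)).Nonempty :=
          fun hne2 => hN ⟨_, _, hd, hne2, hsum2⟩
        rw [Finset.not_nonempty_iff_eq_empty, Finset.union_eq_empty] at hun
        exact hne' (Finset.Subset.antisymm
          (Finset.sdiff_eq_empty_iff_subset.1 hun.1)
          (Finset.sdiff_eq_empty_iff_subset.1 hun.2))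
      have E2 : ∑ i, c i • (if f i = x then a₀ else f i) =
          ∑ i, c i • (if g i = x then a₀ else g i) := by
        rw [hs] at E
        exact add_right_cancel E
      have hfg' := hA (fun i => if f i = x then a₀ else f i)
        (fun i => if g i = x then a₀ else g i) hf'A hg'A E2
      funext i
      by_cases hfi : f i = x
      · have hiIf : i ∈ Finset.univ.filter (fun i => f i = x) := by simp [hfi]
        rw [hIfIg] at hiIf
        have hgi : g i = x := by simpa using hiIf
        rw [hfi, hgi]
      · have hgi : g i ≠ x := by
          intro hgx
          have hiIg : i ∈ Finset.univ.filter (fun i => g i = x) := by simp [hgx]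
          rw [← hIfIg] at hiIg
          exact hfi (by simpa using hiIg)
        have := congrFun hfg' i
        simpa [hfi, hgi] using this
    · -- coefficient of x is nonzero: x would be in the Bad set
      exfalso
      apply hxB
      have hs' : (∑ i ∈ Finset.univ.filter (fun i => f i = x), c i) -
          ∑ i ∈ Finset.univ.filter (fun i => g i = x), c i ≠ 0 := sub_ne_zero.2 hs
      have hkey : ((∑ i ∈ Finset.univ.filter (fun i => f i = x), c i) -
            ∑ i ∈ Finset.univ.filter (fun i => g i = x), c i) • (x - a₀) =
          ∑ i, c i • (if g i = x then a₀ else g i) -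
            ∑ i, c i • (if f i = x then a₀ else f i) := by
        rw [sub_smul, sub_eq_sub_iff_add_eq_add, add_comm]
        exact E
      have hx : x = ((∑ i ∈ Finset.univ.filter (fun i => f i = x), c i) -
            ∑ i ∈ Finset.univ.filter (fun i => g i = x), c i)⁻¹ •
          (∑ i, c i • (if g i = x then a₀ else g i) -
            ∑ i, c i • (if f i = x then a₀ else f i)) + a₀ := by
        rw [← hkey, inv_smul_smul₀ hs', sub_add_cancel]
      rw [hBad]
      apply Finset.mem_image.2
      refine ⟨⟨fun i => ⟨if f i = x then a₀ else f i, hf'A i⟩,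
        fun i => ⟨if g i = x then a₀ else g i, hg'A i⟩,
        Finset.univ.filter (fun i => f i = x),
        Finset.univ.filter (fun i => g i = x)⟩, Finset.mem_univ _, ?_⟩
      exact hx.symm

lemma exists_infinite_sidon {X : Set V} (hX : X.Infinite) (hN : PropertyN c) :
    ∃ A : Set V, A ⊆ X ∧ A.Infinite ∧ IsPhiSidon c A := by
  classical
  have H : ∀ A : Finset V, IsPhiSidon c (↑A : Set V) →
      ∃ x, (x ∈ X ∧ x ∉ A) ∧ IsPhiSidon c (insert x (↑A : Set V)) :=
    fun A hA => sidon_extend hX hN A hA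
  choose! nxt hnxt using H
  set S : ℕ → Finset V := fun n => Nat.rec ∅ (fun _ A => insert (nxt A) A) n with hS
  have hSsucc : ∀ n, S (n + 1) = insert (nxt (S n)) (S n) := fun n => rfl
  have inv : ∀ n, (↑(S n) : Set V) ⊆ X ∧ IsPhiSidon c (↑(S n) : Set V) := by
    intro n
    induction n with
    | zero =>
      constructor
      · intro v hv; exact absurd hv (by simp [hS])
      · intro f g hf _ _
        funext i
        exact absurd (hf i) (by simp [hS])
    | succ n ih =>
      obtain ⟨⟨hx1, _⟩, hx3⟩ := hnxt (S n) ih.2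
      constructor
      · rw [hSsucc, Finset.coe_insert]
        exact Set.insert_subset hx1 ih.1
      · rw [hSsucc, Finset.coe_insert]
        exact hx3
  have hmono : Monotone S := by
    apply monotone_nat_of_le_succ
    intro n
    rw [hSsucc]
    exact Finset.subset_insert _ _
  refine ⟨⋃ n, (↑(S n) : Set V), ?_, ?_, ?_⟩
  · exact Set.iUnion_subset fun n => (inv n).1
  · apply Set.infinite_of_injective_forall_mem (f := fun n => nxt (S n))
    · intro m n heq0
      have heq : nxt (S m) = nxt (S n) := heq0
      by_contra hne
      rcases Ne.lt_or_gt hne with hlt | hlt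
      · have h1 : nxt (S m) ∈ S n := hmono hlt (by rw [hSsucc]; exact Finset.mem_insert_self _ _)
        rw [heq] at h1
        exact (hnxt (S n) (inv n).2).1.2 h1
      · have h1 : nxt (S n) ∈ S m := hmono hlt (by rw [hSsucc]; exact Finset.mem_insert_self _ _)
        rw [← heq] at h1
        exact (hnxt (S m) (inv m).2).1.2 h1
    · intro n
      exact Set.mem_iUnion.2 ⟨n + 1, by rw [hSsucc]; exact_mod_cast Finset.mem_insert_self _ _⟩
  · intro f g hf hg heq
    have hf' : ∀ i, ∃ n, f i ∈ S n := fun i => by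
      simpa using Set.mem_iUnion.1 (hf i)
    have hg' : ∀ i, ∃ n, g i ∈ S n := fun i => by
      simpa using Set.mem_iUnion.1 (hg i)
    choose nf hnf using hf'
    choose ng hng using hg'
    set N := (Finset.univ.sup nf) ⊔ (Finset.univ.sup ng) with hN'
    apply (inv N).2 f g ?_ ?_ heq
    · intro i
      exact_mod_cast hmono (le_trans (Finset.le_sup (Finset.mem_univ i)) le_sup_left) (hnf i)
    · intro i
      exact_mod_cast hmono (le_trans (Finset.le_sup (Finset.mem_univ i)) le_sup_right) (hng i)

end Aux

/-- Nathanson: for an infinite subset X of an infinite vector space and a linear form φ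
with nonzero coefficients, X contains an infinite φ-Sidon set iff X contains a φ-Sidon
set with at least two elements iff φ has property N. -/
theorem sidon_linear_form_tfae (F : Type*) [Field F] (V : Type*) [AddCommGroup V]
    [Module F V] [Infinite V] (X : Set V) (hX : X.Infinite)
    (h : ℕ) (c : Fin h → F) (hc : ∀ i, c i ≠ 0) :
    ((∃ A : Set V, A ⊆ X ∧ A.Infinite ∧ IsPhiSidon c A) ↔ PropertyN c) ∧
    ((∃ A : Set V, A ⊆ X ∧ 2 ≤ Nat.card A ∧ A.Finite ∧ IsPhiSidon c A) ↔ PropertyN c) := by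
  constructor
  · constructor
    · rintro ⟨A, _, hAinf, hAS⟩
      obtain ⟨a, ha, b, hb, hab⟩ := hAinf.nontrivial
      exact propertyN_of_pair hab
        (isPhiSidon_mono (by rintro v (rfl | rfl) <;> assumption) hAS)
    · intro hN
      exact exists_infinite_sidon hX hN
  · constructor
    · rintro ⟨A, _, hcard, hfin, hAS⟩
      have h2 : 1 < A.ncard := by
        rw [← Nat.card_coe_set_eq]
        omega
      obtain ⟨a, b, ha, hb, hab⟩ := (Set.one_lt_ncard_iff hfin).1 h2
      exact propertyN_of_pair hab
        (isPhiSidon_mono (by rintro v (rfl | rfl) <;> assumption) hAS)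
    · intro hN
      obtain ⟨A, hAX, hAinf, hAS⟩ := exists_infinite_sidon hX hN
      obtain ⟨a, ha, b, hb, hab⟩ := hAinf.nontrivial
      refine ⟨{a, b}, ?_, ?_, ?_, ?_⟩
      · rintro v (rfl | rfl)
        · exact hAX ha
        · exact hAX hb
      · rw [Nat.card_coe_set_eq, Set.ncard_pair hab]
      · exact (Set.finite_singleton b).insert a
      · exact isPhiSidon_mono (by rintro v (rfl | rfl) <;> assumption) hAS
end

section
/- Let φ(x₁,…,x_h) = Σᵢ cᵢxᵢ be a linear form with integer coefficients satisfying property N. Then the set A = {log p : p prime} of real numbers is a φ-Sidon set: if p₁,…,p_h and q₁,…,q_h are primes with Σᵢ cᵢ log pᵢ = Σᵢ cᵢ log qᵢ, then pᵢ = qᵢ for all i. -/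
/-!
Exponentiating, `∑ cᵢ log pᵢ = ∑ cᵢ log qᵢ` says `∏ pᵢ ^ cᵢ = ∏ qᵢ ^ cᵢ` in `ℚ`. Taking `r`-adic
valuations for a prime `r` shows that the coefficients of the indices sent to `r` by `p` and by `q`
have the same sum. Property N forces two index sets with equal coefficient sums to coincide, so the
fibres of `p` and `q` over every prime agree, i.e. `p = q`.
-/

open Finset

section PropertyN

variable {ι M : Type*} [AddCancelCommMonoid M] {c : ι → M}

theorem Finset.eq_of_sum_eq_of_no_disjoint_equal_sums [DecidableEq ι]
    (hN : ¬ ∃ I₁ I₂ : Finset ι, Disjoint I₁ I₂ ∧ (I₁ ∪ I₂).Nonempty ∧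
      ∑ i ∈ I₁, c i = ∑ i ∈ I₂, c i)
    {S T : Finset ι} (hST : ∑ i ∈ S, c i = ∑ i ∈ T, c i) : S = T := by
  by_contra hne
  exact hN ⟨S \ T, T \ S, disjoint_sdiff_sdiff, symmDiff_nonempty.2 hne,
    sum_sdiff_eq_sum_sdiff_iff.2 hST⟩

theorem eq_of_sum_fiber_eq_of_no_disjoint_equal_sums [Fintype ι] [DecidableEq ι] {α : Type*}
    [DecidableEq α]
    (hN : ¬ ∃ I₁ I₂ : Finset ι, Disjoint I₁ I₂ ∧ (I₁ ∪ I₂).Nonempty ∧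
      ∑ i ∈ I₁, c i = ∑ i ∈ I₂, c i)
    {p q : ι → α} (hfib : ∀ i, ∑ j with p j = p i, c j = ∑ j with q j = p i, c j) :
    p = q := by
  funext i
  have hfib_eq := eq_of_sum_eq_of_no_disjoint_equal_sums hN (hfib i)
  have hi : i ∈ ({j | q j = p i} : Finset ι) := hfib_eq ▸ by simp
  exact (mem_filter.1 hi).2.symm

end PropertyN

theorem padicValRat.prod {ι : Type*} {p : ℕ} [Fact p.Prime] {s : Finset ι} {f : ι → ℚ}
    (hf : ∀ i ∈ s, f i ≠ 0) :
    padicValRat p (∏ i ∈ s, f i) = ∑ i ∈ s, padicValRat p (f i) := by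
  classical
  induction s using Finset.induction with
  | empty => simp
  | insert a s ha ih =>
    rw [prod_insert ha, sum_insert ha, padicValRat.mul (hf a (mem_insert_self a s))
        (prod_ne_zero_iff.2 fun i hi => hf i (mem_insert_of_mem hi)),
      ih fun i hi => hf i (mem_insert_of_mem hi)]

theorem padicValRat_natCast_prime {p q : ℕ} [Fact p.Prime] (hq : q.Prime) :
    padicValRat p q = if q = p then 1 else 0 := by
  split_ifs with h
  · subst h
    exact padicValRat.self hq.one_lt
  · rw [padicValRat.of_nat, padicValNat_primes (hq := ⟨hq⟩) (Ne.symm h), Nat.cast_zero]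

theorem padicValRat_prod_prime_zpow {ι : Type*} {r : ℕ} [Fact r.Prime] {s : Finset ι}
    {f : ι → ℕ} (hf : ∀ i ∈ s, (f i).Prime) (c : ι → ℤ) :
    padicValRat r (∏ i ∈ s, (f i : ℚ) ^ c i) = ∑ i ∈ s with f i = r, c i := by
  rw [padicValRat.prod fun i hi => zpow_ne_zero _ (Nat.cast_ne_zero.2 (hf i hi).ne_zero),
    sum_filter]
  refine sum_congr rfl fun i hi => ?_
  rw [padicValRat.zpow, padicValRat_natCast_prime (hf i hi), mul_ite, mul_one, mul_zero]

theorem sum_mul_log_natCast_eq_log_prod_zpow {ι : Type*} {s : Finset ι} {f : ι → ℕ}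
    (hf : ∀ i ∈ s, f i ≠ 0) (c : ι → ℤ) :
    ∑ i ∈ s, (c i : ℝ) * Real.log (f i) = Real.log ((∏ i ∈ s, (f i : ℚ) ^ c i : ℚ) : ℝ) := by
  push_cast
  rw [Real.log_prod fun i hi => zpow_ne_zero _ (Nat.cast_ne_zero.2 (hf i hi))]
  simp only [Real.log_zpow]

/-- If a linear form with integer coefficients has property N, then {log p : p prime}
is a Sidon set for it. -/
theorem log_primes_phi_sidon (h : ℕ) (c : Fin h → ℤ)
    (hN : ¬ ∃ I₁ I₂ : Finset (Fin h), Disjoint I₁ I₂ ∧ (I₁ ∪ I₂).Nonempty ∧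
      ∑ i ∈ I₁, c i = ∑ i ∈ I₂, c i)
    (p q : Fin h → ℕ) (hp : ∀ i, Nat.Prime (p i)) (hq : ∀ i, Nat.Prime (q i))
    (heq : ∑ i, (c i : ℝ) * Real.log (p i) = ∑ i, (c i : ℝ) * Real.log (q i)) :
    p = q := by
  classical
  have hpos : ∀ f : Fin h → ℕ, (∀ i, (f i).Prime) → (0 : ℝ) < ((∏ i, (f i : ℚ) ^ c i : ℚ) : ℝ) :=
    fun f hf => Rat.cast_pos.2 <| prod_pos fun i _ => zpow_pos (Nat.cast_pos.2 (hf i).pos) _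
  have hprod : ∏ i, (p i : ℚ) ^ c i = ∏ i, (q i : ℚ) ^ c i := by
    rw [sum_mul_log_natCast_eq_log_prod_zpow (fun i _ => (hp i).ne_zero),
      sum_mul_log_natCast_eq_log_prod_zpow (fun i _ => (hq i).ne_zero)] at heq
    exact_mod_cast Real.log_injOn_pos (hpos p hp) (hpos q hq) heq
  refine eq_of_sum_fiber_eq_of_no_disjoint_equal_sums hN fun i => ?_
  have := Fact.mk (hp i)
  rw [← padicValRat_prod_prime_zpow (fun j _ => hp j), ← padicValRat_prod_prime_zpow
    (fun j _ => hq j), hprod]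
end

section
/- Every infinite classical Sidon set A of positive integers satisfies liminf_{n→∞} A(n)·√(log n / n) < ∞; in particular, there is no infinite Sidon set with A(n) ≥ c√n for some constant c > 0 and all sufficiently large n. -/
/-!
Split `A` into dyadic blocks `Bᵢ = A ∩ [2^i, 2^(i+1))` and put `σᵢ = |Bᵢ|² / 2^i`. Cutting `Bᵢ`
into `2^(i-s)` intervals of length `2^s`, Cauchy–Schwarz produces about `|Bᵢ|² 2^s / 2^i` pairs of
distinct elements of `Bᵢ` at distance `< 2^s`; in a Sidon set these pairs have distinct
differences, so all blocks together contain at most `2^(s+1)` of them. For a block with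
`|Bᵢ| ≳ 2^(i/4)` this can be used at about `i/4` scales `s`, and summing over `s` gives
`∑_{i ≤ J} (i+1) σᵢ = O(J)`. If instead `A(n) ≥ K √(n / log n)` for all large `n`, a weighted
Cauchy–Schwarz inequality gives `j ∑_{i ≤ j} σᵢ (3/4)^(j-i) ≳ K²` for all large `j`, and summing
over `j ≤ J` gives `∑_{i ≤ J} (i+1) σᵢ ≳ K² J`, which is absurd for large `K`. Finally a bound
`A(n) ≥ c √n` would make `A(n) √(log n / n) ≥ c √(log n)` unbounded.
-/

open Finset

namespace Sidon

def IsSidon (A : Set ℕ) : Prop :=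
  ∀ a ∈ A, ∀ b ∈ A, ∀ c ∈ A, ∀ d ∈ A, a + b = c + d → ({a, b} : Set ℕ) = {c, d}

/-- Ordered pairs, so that the Sidon property is exactly injectivity of `(a, b) ↦ a - b` on them. -/
def closePairs (S : Finset ℕ) (d : ℕ) : Finset (ℕ × ℕ) :=
  {p ∈ S ×ˢ S | p.1 ≠ p.2 ∧ |(p.1 : ℤ) - p.2| < d}

variable {A : Set ℕ}

lemma IsSidon.eq_of_sub_eq (hA : IsSidon A) {a b c d : ℕ} (ha : a ∈ A) (hb : b ∈ A)
    (hc : c ∈ A) (hd : d ∈ A) (hab : a ≠ b) (h : (a : ℤ) - b = c - d) : a = c ∧ b = d := by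
  have hsum := hA a ha d hd c hc b hb (by omega)
  have hc' : c ∈ ({a, d} : Set ℕ) := hsum ▸ Set.mem_insert c {b}
  rcases hc' with rfl | rfl <;> omega

lemma IsSidon.card_closePairs_le (hA : IsSidon A) {S : Finset ℕ} (hS : ↑S ⊆ A) (d : ℕ) :
    #(closePairs S d) ≤ 2 * d := by
  have hmaps : ∀ p ∈ closePairs S d, (p.1 : ℤ) - p.2 ∈ Ioo (-(d : ℤ)) d := by
    intro p hp
    simp only [closePairs, mem_filter] at hp
    exact mem_Ioo.2 (abs_lt.1 hp.2.2)
  have hinj : Set.InjOn (fun p : ℕ × ℕ => (p.1 : ℤ) - p.2) (closePairs S d) := by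
    rintro ⟨a, b⟩ hp ⟨c, d⟩ hq h
    simp only [closePairs, coe_filter, mem_product, Set.mem_ofPred_eq] at hp hq
    obtain ⟨rfl, rfl⟩ := hA.eq_of_sub_eq (hS hp.1.1) (hS hp.1.2) (hS hq.1.1) (hS hq.1.2) hp.2.1 h
    rfl
  have := card_le_card_of_injOn _ hmaps hinj
  rw [Int.card_Ioo] at this
  omega

lemma sum_card_closePairs_le_card_closePairs_biUnion {ι : Type*} (I : Finset ι) (S : ι → Finset ℕ)
    (hS : (I : Set ι).PairwiseDisjoint S) (d : ℕ) :
    ∑ i ∈ I, #(closePairs (S i) d) ≤ #(closePairs (I.biUnion S) d) := by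
  classical
  rw [← card_biUnion]
  · refine card_le_card fun p hp => ?_
    simp only [mem_biUnion, closePairs, mem_filter, mem_product] at hp ⊢
    obtain ⟨i, hi, ⟨h1, h2⟩, h3⟩ := hp
    exact ⟨⟨⟨i, hi, h1⟩, ⟨i, hi, h2⟩⟩, h3⟩
  · intro i hi j hj hij
    refine disjoint_left.2 fun p hpi hpj => ?_
    simp only [closePairs, mem_filter, mem_product] at hpi hpj
    exact disjoint_left.1 (hS hi hj hij) hpi.1.1 hpj.1.1

lemma abs_sub_lt_of_div_eq {a b d : ℕ} (hd : 0 < d) (h : a / d = b / d) :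
    |(a : ℤ) - b| < d := by
  have ha := Nat.div_add_mod a d
  have hb := Nat.div_add_mod b d
  have := Nat.mod_lt a hd
  have := Nat.mod_lt b hd
  rw [h] at ha
  rw [abs_lt]
  constructor <;> omega

/-- Cauchy–Schwarz over the `k` subintervals of length `d`: two elements of the same subinterval
are equal or form a close pair. -/
lemma sq_card_le_of_subset_Ico {S : Finset ℕ} {x k d : ℕ} (hS : S ⊆ Ico (x * d) ((x + k) * d)) :
    #S ^ 2 ≤ k * (#S + #(closePairs S d)) := by
  rcases Nat.eq_zero_or_pos d with rfl | hd
  · simp [subset_empty.1 (by simpa using hS)]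
  have hmaps : ∀ a ∈ S, a / d ∈ Ico x (x + k) := by
    intro a ha
    have ⟨h1, h2⟩ := mem_Ico.1 (hS ha)
    exact mem_Ico.2 ⟨(Nat.le_div_iff_mul_le hd).2 h1, (Nat.div_lt_iff_lt_mul hd).2 h2⟩
  set F : ℕ → Finset ℕ := fun p => {a ∈ S | a / d = p}
  set E : Finset (ℕ × ℕ) := {q ∈ S ×ˢ S | q.1 / d = q.2 / d}
  have hE : #E = ∑ p ∈ Ico x (x + k), #(F p) ^ 2 := by
    rw [card_eq_sum_card_fiberwise (f := fun q => q.1 / d) fun q hq =>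
      hmaps q.1 (mem_product.1 (mem_filter.1 hq).1).1]
    refine sum_congr rfl fun p _ => ?_
    rw [sq, ← card_product]
    congr 1
    ext ⟨a, b⟩
    simp only [F, mem_filter, mem_product]
    grind
  have hEsub : E ⊆ S.diag ∪ closePairs S d := by
    rintro ⟨a, b⟩ hq
    simp only [E, mem_filter, mem_product] at hq
    simp only [mem_union, mem_diag, closePairs, mem_filter, mem_product]
    by_cases hab : a = b
    · exact Or.inl ⟨hq.1.1, hab⟩
    · exact Or.inr ⟨hq.1, hab, abs_sub_lt_of_div_eq hd hq.2⟩
  calc #S ^ 2 = (∑ p ∈ Ico x (x + k), #(F p)) ^ 2 := by rw [← card_eq_sum_card_fiberwise hmaps]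
    _ ≤ k * ∑ p ∈ Ico x (x + k), #(F p) ^ 2 := by
      simpa using sq_sum_le_card_mul_sum_sq (s := Ico x (x + k)) (f := fun p => #(F p))
    _ ≤ k * (#S + #(closePairs S d)) := by
      rw [← hE, ← diag_card S]
      exact Nat.mul_le_mul_left k ((card_le_card hEsub).trans (card_union_le _ _))

lemma succ_sq_le_four_mul_two_pow (i : ℕ) : (i + 1) ^ 2 ≤ 4 * 2 ^ i := by
  induction i with
  | zero => norm_num
  | succ i ih =>
    have := Nat.lt_two_pow_self (n := i)
    rw [pow_succ 2 i]
    nlinarith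

lemma succ_mul_sq_le_of_pow_four_le {i m : ℕ} (h : m ^ 4 ≤ 2 ^ (i + 4)) :
    (i + 1) * m ^ 2 ≤ 8 * 2 ^ i := by
  refine (Nat.pow_le_pow_iff_left two_ne_zero).1 ?_
  calc ((i + 1) * m ^ 2) ^ 2 = (i + 1) ^ 2 * m ^ 4 := by ring
    _ ≤ (4 * 2 ^ i) * 2 ^ (i + 4) := Nat.mul_le_mul (succ_sq_le_four_mul_two_pow i) h
    _ = (8 * 2 ^ i) ^ 2 := by ring

open scoped Classical in
noncomputable def dyadicBlock (A : Set ℕ) (i : ℕ) : Finset ℕ :=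
  {a ∈ Ico (2 ^ i) (2 ^ (i + 1)) | a ∈ A}

noncomputable def sqDensity (A : Set ℕ) (i : ℕ) : ℝ :=
  (#(dyadicBlock A i) : ℝ) ^ 2 / 2 ^ i

lemma mem_dyadicBlock {i a : ℕ} : a ∈ dyadicBlock A i ↔ (2 ^ i ≤ a ∧ a < 2 ^ (i + 1)) ∧ a ∈ A := by
  simp [dyadicBlock]

lemma pairwiseDisjoint_dyadicBlock (I : Set ℕ) : I.PairwiseDisjoint (dyadicBlock A) := by
  intro i _ j _ hij
  refine disjoint_left.2 fun a hai haj => ?_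
  rw [mem_dyadicBlock] at hai haj
  rcases Nat.lt_or_gt_of_ne hij with h | h
  · have := Nat.pow_le_pow_right two_pos (Nat.succ_le_of_lt h)
    omega
  · have := Nat.pow_le_pow_right two_pos (Nat.succ_le_of_lt h)
    omega

lemma sqDensity_nonneg (i : ℕ) : 0 ≤ sqDensity A i := by
  unfold sqDensity; positivity

lemma sq_card_dyadicBlock_le {i s : ℕ} (hs : s ≤ i) :
    #(dyadicBlock A i) ^ 2 ≤
      2 ^ (i - s) * (#(dyadicBlock A i) + #(closePairs (dyadicBlock A i) (2 ^ s))) := by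
  refine sq_card_le_of_subset_Ico (x := 2 ^ (i - s)) fun a ha => ?_
  have hi : 2 ^ (i - s) * 2 ^ s = 2 ^ i := by rw [← pow_add, Nat.sub_add_cancel hs]
  rw [mem_dyadicBlock] at ha
  rw [mem_Ico, ← two_mul, hi, mul_assoc, hi, ← pow_succ']
  exact ha.1

lemma sq_card_dyadicBlock_mul_le {i s : ℕ} (hs : s ≤ i)
    (hheavy : 2 ^ (i + 1) ≤ #(dyadicBlock A i) * 2 ^ s) :
    #(dyadicBlock A i) ^ 2 * 2 ^ s ≤ 2 ^ (i + 1) * #(closePairs (dyadicBlock A i) (2 ^ s)) := by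
  set m := #(dyadicBlock A i)
  set P := #(closePairs (dyadicBlock A i) (2 ^ s))
  have hprod : m ^ 2 * 2 ^ s ≤ 2 ^ i * m + 2 ^ i * P := by
    calc m ^ 2 * 2 ^ s ≤ 2 ^ (i - s) * (m + P) * 2 ^ s :=
          Nat.mul_le_mul_right _ (sq_card_dyadicBlock_le hs)
      _ = 2 ^ i * m + 2 ^ i * P := by
          rw [mul_right_comm, ← pow_add, Nat.sub_add_cancel hs, mul_add]
  have hm : 2 * (2 ^ i * m) ≤ m ^ 2 * 2 ^ s := by
    calc 2 * (2 ^ i * m) = 2 ^ (i + 1) * m := by ring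
      _ ≤ m * 2 ^ s * m := Nat.mul_le_mul_right m hheavy
      _ = m ^ 2 * 2 ^ s := by ring
  rw [pow_succ 2 i]
  linarith

lemma two_pow_succ_le_mul_two_pow {i s m : ℕ} (hm : 2 ^ (i + 4) ≤ m ^ 4) (hs : i - i / 4 ≤ s) :
    2 ^ (i + 1) ≤ m * 2 ^ s := by
  refine (Nat.pow_le_pow_iff_left (n := 4) (by norm_num)).1 ?_
  calc (2 ^ (i + 1)) ^ 4 ≤ 2 ^ (i + 4) * 2 ^ (4 * s) := by
        rw [← pow_mul, ← pow_add]
        exact Nat.pow_le_pow_right two_pos (by omega)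
    _ ≤ m ^ 4 * 2 ^ (4 * s) := Nat.mul_le_mul_right _ hm
    _ = (m * 2 ^ s) ^ 4 := by ring

lemma IsSidon.sum_sqDensity_le_four (hA : IsSidon A) (s : ℕ) (I : Finset ℕ)
    (hI : ∀ i ∈ I, s ≤ i ∧ 2 ^ (i + 1) ≤ #(dyadicBlock A i) * 2 ^ s) :
    ∑ i ∈ I, sqDensity A i ≤ 4 := by
  have hterm : ∀ i ∈ I,
      sqDensity A i ≤ 2 / 2 ^ s * #(closePairs (dyadicBlock A i) (2 ^ s)) := by
    intro i hi
    have := sq_card_dyadicBlock_mul_le (hI i hi).1 (hI i hi).2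
    rw [sqDensity, div_mul_eq_mul_div, div_le_div_iff₀ (by positivity) (by positivity)]
    rw [pow_succ 2 i] at this
    exact_mod_cast (by linarith : #(dyadicBlock A i) ^ 2 * 2 ^ s ≤
      2 * #(closePairs (dyadicBlock A i) (2 ^ s)) * 2 ^ i)
  have hbudget : ∑ i ∈ I, #(closePairs (dyadicBlock A i) (2 ^ s)) ≤ 2 * 2 ^ s := by
    refine (sum_card_closePairs_le_card_closePairs_biUnion I _
      (pairwiseDisjoint_dyadicBlock _) _).trans
      (hA.card_closePairs_le ?_ _)
    intro a ha
    obtain ⟨i, _, hai⟩ := mem_biUnion.1 ha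
    exact (mem_dyadicBlock.1 hai).2
  calc ∑ i ∈ I, sqDensity A i
      ≤ 2 / 2 ^ s * ∑ i ∈ I, (#(closePairs (dyadicBlock A i) (2 ^ s)) : ℝ) := by
        rw [mul_sum]; exact sum_le_sum hterm
    _ ≤ 2 / 2 ^ s * (2 * 2 ^ s) := by
        gcongr; exact_mod_cast hbudget
    _ = 4 := by field_simp; norm_num

/-- For a heavy block `i`, every scale `2^s` with `i - i/4 ≤ s ≤ i` is usable in
`IsSidon.sum_sqDensity_le_four`, so the block is counted `i/4 + 1` times in the sum over `s`. -/
lemma IsSidon.sum_mul_sqDensity_heavy_le (hA : IsSidon A) (J : ℕ) :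
    ∑ i ∈ range (J + 1) with 2 ^ (i + 4) ≤ #(dyadicBlock A i) ^ 4,
      ((i / 4 + 1 : ℕ) : ℝ) * sqDensity A i ≤ 4 * (J + 1) := by
  set H := {i ∈ range (J + 1) | 2 ^ (i + 4) ≤ #(dyadicBlock A i) ^ 4}
  calc ∑ i ∈ H, ((i / 4 + 1 : ℕ) : ℝ) * sqDensity A i
      = ∑ i ∈ H, ∑ _s ∈ Icc (i - i / 4) i, sqDensity A i := by
        refine sum_congr rfl fun i _ => ?_
        rw [sum_const, Nat.card_Icc, nsmul_eq_mul]
        congr 2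
        omega
    _ = ∑ s ∈ range (J + 1), ∑ i ∈ H with s ∈ Icc (i - i / 4) i, sqDensity A i := by
        refine sum_comm' fun i s => ?_
        simp only [H, mem_filter, mem_range, mem_Icc]
        omega
    _ ≤ ∑ _s ∈ range (J + 1), (4 : ℝ) := by
        refine sum_le_sum fun s _ => hA.sum_sqDensity_le_four s _ fun i hi => ?_
        simp only [H, mem_filter, mem_Icc] at hi
        exact ⟨hi.2.2, two_pow_succ_le_mul_two_pow hi.1.2 hi.2.1⟩
    _ = 4 * (J + 1) := by simp [mul_comm]

lemma IsSidon.sum_succ_mul_sqDensity_le (hA : IsSidon A) (J : ℕ) :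
    ∑ i ∈ range (J + 1), ((i : ℝ) + 1) * sqDensity A i ≤ 24 * (J + 1) := by
  rw [← sum_filter_add_sum_filter_not _ fun i => 2 ^ (i + 4) ≤ #(dyadicBlock A i) ^ 4]
  have hheavy : ∑ i ∈ range (J + 1) with 2 ^ (i + 4) ≤ #(dyadicBlock A i) ^ 4,
      ((i : ℝ) + 1) * sqDensity A i ≤ 16 * (J + 1) :=
    calc _ ≤ ∑ i ∈ range (J + 1) with 2 ^ (i + 4) ≤ #(dyadicBlock A i) ^ 4,
          4 * (((i / 4 + 1 : ℕ) : ℝ) * sqDensity A i) := by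
          refine sum_le_sum fun i _ => ?_
          rw [← mul_assoc]
          refine mul_le_mul_of_nonneg_right ?_ (sqDensity_nonneg i)
          exact_mod_cast (by omega : i + 1 ≤ 4 * (i / 4 + 1))
      _ ≤ 16 * (J + 1) := by
          rw [← mul_sum]
          linarith [hA.sum_mul_sqDensity_heavy_le J]
  have hlight : ∑ i ∈ range (J + 1) with ¬ 2 ^ (i + 4) ≤ #(dyadicBlock A i) ^ 4,
      ((i : ℝ) + 1) * sqDensity A i ≤ 8 * (J + 1) :=
    calc _ ≤ ∑ i ∈ range (J + 1) with ¬ 2 ^ (i + 4) ≤ #(dyadicBlock A i) ^ 4, (8 : ℝ) := by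
          refine sum_le_sum fun i hi => ?_
          have := succ_mul_sq_le_of_pow_four_le (not_le.1 (mem_filter.1 hi).2).le
          rw [sqDensity, ← mul_div_assoc, div_le_iff₀ (by positivity)]
          exact_mod_cast this
      _ ≤ ∑ _i ∈ range (J + 1), (8 : ℝ) :=
          sum_le_sum_of_subset_of_nonneg (filter_subset _ _) fun _ _ _ => by norm_num
      _ = 8 * (J + 1) := by simp [mul_comm]
  linarith

lemma sum_two_pow_mul_geometric_le (j : ℕ) :
    ∑ i ∈ range (j + 1), (2 : ℝ) ^ i * (4 / 3) ^ (j - i) ≤ 3 * 2 ^ j := by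
  induction j with
  | zero => norm_num
  | succ j ih =>
    rw [sum_range_succ, Nat.sub_self, pow_zero, mul_one]
    have hshift : ∑ i ∈ range (j + 1), (2 : ℝ) ^ i * (4 / 3) ^ (j + 1 - i) =
        4 / 3 * ∑ i ∈ range (j + 1), (2 : ℝ) ^ i * (4 / 3) ^ (j - i) := by
      rw [mul_sum]
      refine sum_congr rfl fun i hi => ?_
      rw [Nat.sub_add_comm (mem_range_succ_iff.1 hi), pow_succ]
      ring
    rw [hshift, pow_succ]
    linarith

/-- Cauchy–Schwarz with weights `2^i (4/3)^(j-i)`; the ratio `4/3 < 2` keeps their sum `O(2^j)`. -/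
lemma sq_sum_le_mul_sum_geometric (m : ℕ → ℝ) (j : ℕ) :
    (∑ i ∈ range (j + 1), m i) ^ 2 ≤
      3 * 2 ^ j * ∑ i ∈ range (j + 1), m i ^ 2 / 2 ^ i * (3 / 4) ^ (j - i) := by
  have hg : ∀ i ∈ range (j + 1), (0 : ℝ) < 2 ^ i * (4 / 3) ^ (j - i) := fun _ _ => by positivity
  have htitu := sq_sum_div_le_sum_sq_div _ m hg
  rw [div_le_iff₀ (sum_pos hg nonempty_range_add_one)] at htitu
  have hterm : ∀ i ∈ range (j + 1),
      m i ^ 2 / (2 ^ i * (4 / 3) ^ (j - i)) = m i ^ 2 / 2 ^ i * (3 / 4) ^ (j - i) := by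
    intro i _
    rw [← div_div, div_eq_mul_inv _ ((4 / 3 : ℝ) ^ (j - i)), ← inv_pow]
    norm_num
  rw [sum_congr rfl hterm] at htitu
  refine htitu.trans (mul_le_mul_of_nonneg_left (sum_two_pow_mul_geometric_le j) ?_) |>.trans_eq
    (mul_comm _ _)
  exact sum_nonneg fun i _ => by positivity

lemma hasSum_add_mul_geometric (x : ℝ) :
    HasSum (fun k : ℕ => (x + k) * (3 / 4 : ℝ) ^ k) (4 * x + 12) := by
  have hgeom :=
    (hasSum_geometric_of_lt_one (r := (3 / 4 : ℝ)) (by norm_num) (by norm_num)).mul_left x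
  have harith := hasSum_coe_mul_geometric_of_norm_lt_one (r := (3 / 4 : ℝ)) (by norm_num)
  have hsplit : (fun k : ℕ => (x + k) * (3 / 4 : ℝ) ^ k) =
      fun k : ℕ => x * (3 / 4) ^ k + k * (3 / 4) ^ k := by
    ext k
    ring
  rw [hsplit, show 4 * x + 12 = x * (1 - 3 / 4)⁻¹ + 3 / 4 / (1 - 3 / 4) ^ 2 by ring]
  exact hgeom.add harith

lemma sum_mul_sum_geometric_le (σ : ℕ → ℝ) (hσ : ∀ i, 0 ≤ σ i) (J : ℕ) :
    ∑ j ∈ range (J + 1), (j : ℝ) * ∑ i ∈ range (j + 1), σ i * (3 / 4) ^ (j - i) ≤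
      12 * ∑ i ∈ range (J + 1), ((i : ℝ) + 1) * σ i := by
  have hswap : ∑ j ∈ range (J + 1), (j : ℝ) * ∑ i ∈ range (j + 1), σ i * (3 / 4) ^ (j - i) =
      ∑ i ∈ range (J + 1), σ i * ∑ k ∈ range (J + 1 - i), ((i : ℝ) + k) * (3 / 4) ^ k := by
    simp_rw [mul_sum, range_eq_Ico, ← sum_Ico_Ico_comm, sum_Ico_eq_sum_range]
    refine sum_congr rfl fun i _ => sum_congr rfl fun k _ => ?_
    rw [Nat.add_sub_cancel_left]
    push_cast
    ring
  rw [hswap, mul_sum]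
  refine sum_le_sum fun i _ => ?_
  have hinner := sum_le_hasSum (range (J + 1 - i)) (fun k _ => by positivity)
    (hasSum_add_mul_geometric i)
  nlinarith [hσ i]

lemma card_le_one_add_sum_card_dyadicBlock (A : Set ℕ) (j : ℕ) :
    Nat.card {a : ℕ | a ∈ A ∧ a ≤ 2 ^ j} ≤ 1 + ∑ i ∈ range (j + 1), #(dyadicBlock A i) := by
  have hsub : {a : ℕ | a ∈ A ∧ a ≤ 2 ^ j} ⊆
      ↑(insert 0 ((range (j + 1)).biUnion (dyadicBlock A))) := by
    rintro a ⟨haA, haj⟩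
    rcases Nat.eq_zero_or_pos a with rfl | ha
    · exact mem_insert_self _ _
    refine mem_insert_of_mem (mem_biUnion.2 ⟨Nat.log 2 a, ?_, mem_dyadicBlock.2 ⟨⟨?_, ?_⟩, haA⟩⟩)
    · exact mem_range_succ_iff.2 (Nat.log_pow (b := 2) one_lt_two j ▸ Nat.log_mono_right haj)
    · exact Nat.pow_log_le_self 2 ha.ne'
    · exact Nat.lt_pow_succ_log_self one_lt_two a
  calc Nat.card {a : ℕ | a ∈ A ∧ a ≤ 2 ^ j}
      ≤ #(insert 0 ((range (j + 1)).biUnion (dyadicBlock A))) := by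
        refine (Nat.card_mono (finite_toSet _) hsub).trans_eq ?_
        rw [Nat.card_coe_set_eq, Set.ncard_coe_finset]
    _ ≤ 1 + ∑ i ∈ range (j + 1), #(dyadicBlock A i) := by
        have := card_biUnion_le (s := range (j + 1)) (t := dyadicBlock A)
        have := card_insert_le 0 ((range (j + 1)).biUnion (dyadicBlock A))
        omega

noncomputable def smoothedDensity (A : Set ℕ) (j : ℕ) : ℝ :=
  ∑ i ∈ range (j + 1), sqDensity A i * (3 / 4) ^ (j - i)

lemma smoothedDensity_nonneg (j : ℕ) : 0 ≤ smoothedDensity A j :=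
  sum_nonneg fun i _ => mul_nonneg (sqDensity_nonneg i) (by positivity)

lemma mul_sq_card_le_smoothedDensity (A : Set ℕ) (j : ℕ) :
    (j : ℝ) * Nat.card {a : ℕ | a ∈ A ∧ a ≤ 2 ^ j} ^ 2 ≤
      2 ^ j * (2 + 6 * (j * smoothedDensity A j)) := by
  have hcount : (Nat.card {a : ℕ | a ∈ A ∧ a ≤ 2 ^ j} : ℝ) ≤
      1 + ∑ i ∈ range (j + 1), (#(dyadicBlock A i) : ℝ) := by
    exact_mod_cast card_le_one_add_sum_card_dyadicBlock A j
  set T : ℝ := ∑ i ∈ range (j + 1), (#(dyadicBlock A i) : ℝ)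
  have hT : T ^ 2 ≤ 3 * 2 ^ j * smoothedDensity A j :=
    sq_sum_le_mul_sum_geometric _ j
  have hj : (j : ℝ) ≤ 2 ^ j := by exact_mod_cast Nat.lt_two_pow_self.le
  have hsq : (Nat.card {a : ℕ | a ∈ A ∧ a ≤ 2 ^ j} : ℝ) ^ 2 ≤
      2 + 6 * 2 ^ j * smoothedDensity A j := by
    nlinarith [sq_nonneg (T - 1)]
  nlinarith [Nat.cast_nonneg (α := ℝ) j]

lemma IsSidon.sum_mul_smoothedDensity_le (hA : IsSidon A) (J : ℕ) :
    ∑ j ∈ range (J + 1), (j : ℝ) * smoothedDensity A j ≤ 288 * (J + 1) := by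
  have := sum_mul_sum_geometric_le (sqDensity A) sqDensity_nonneg J
  have := hA.sum_succ_mul_sqDensity_le J
  unfold smoothedDensity
  linarith

lemma IsSidon.frequently_mul_sq_card_le (hA : IsSidon A) :
    ∃ᶠ j : ℕ in Filter.atTop,
      (j : ℝ) * Nat.card {a : ℕ | a ∈ A ∧ a ≤ 2 ^ j} ^ 2 ≤ 3458 * 2 ^ j := by
  rw [Filter.frequently_atTop]
  -- `3458 = 2 + 6 * 576`, and `576 * (j₀ + 1)` exceeds the bound `288 * (2 * j₀ + 1)`.
  by_contra! ⟨j₀, hj₀⟩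
  have hlarge : ∀ j ∈ Icc j₀ (2 * j₀), (576 : ℝ) < j * smoothedDensity A j := by
    intro j hj
    have := (hj₀ j (mem_Icc.1 hj).1).trans_le (mul_sq_card_le_smoothedDensity A j)
    have : (0 : ℝ) < 2 ^ j := by positivity
    nlinarith
  have hsub : Icc j₀ (2 * j₀) ⊆ range (2 * j₀ + 1) := fun j hj =>
    mem_range_succ_iff.2 (mem_Icc.1 hj).2
  have hupper := (sum_le_sum_of_subset_of_nonneg hsub fun j _ _ =>
    mul_nonneg (Nat.cast_nonneg j) (smoothedDensity_nonneg j)).trans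
      (hA.sum_mul_smoothedDensity_le (2 * j₀))
  have hlower := sum_lt_sum_of_nonempty (nonempty_Icc.2 (by omega)) hlarge
  rw [sum_const, Nat.card_Icc, show 2 * j₀ + 1 - j₀ = j₀ + 1 by omega, nsmul_eq_mul] at hlower
  push_cast at hlower hupper
  linarith

lemma mul_sqrt_log_two_pow_div_le {x C : ℝ} {j : ℕ} (hx : 0 ≤ x) (h : j * x ^ 2 ≤ C * 2 ^ j) :
    x * √(Real.log (2 ^ j) / 2 ^ j) ≤ √C := by
  rw [← Real.sqrt_sq hx, ← Real.sqrt_mul (sq_nonneg x)]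
  refine Real.sqrt_le_sqrt ?_
  rw [Real.log_pow, ← mul_div_assoc, div_le_iff₀ (by positivity)]
  have hlog : Real.log 2 ≤ 1 := by linarith [Real.log_two_lt_d9]
  nlinarith [Real.log_nonneg one_le_two, mul_nonneg (Nat.cast_nonneg (α := ℝ) j) (sq_nonneg x)]

lemma not_exists_mul_sqrt_le_of_frequently {f : ℕ → ℝ} {L : ℝ}
    (hf : ∃ᶠ n : ℕ in Filter.atTop, f n * √(Real.log n / n) ≤ L) :
    ¬ ∃ c : ℝ, 0 < c ∧ ∃ n₀ : ℕ, ∀ n ≥ n₀, c * √n ≤ f n := by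
  rintro ⟨c, hc, n₀, hn₀⟩
  have hlog : ∀ᶠ n : ℕ in Filter.atTop, (L / c) ^ 2 < Real.log n :=
    (Real.tendsto_log_atTop.comp tendsto_natCast_atTop_atTop).eventually_gt_atTop _
  obtain ⟨n, hfn, hn, hlogn⟩ :=
    (hf.and_eventually ((Filter.eventually_ge_atTop (n₀ + 1)).and hlog)).exists
  have hn0 : (0 : ℝ) < n := by exact_mod_cast (by omega : 0 < n)
  have hupper : c * √(Real.log n) ≤ L :=
    calc c * √(Real.log n) = c * √n * √(Real.log n / n) := by
          rw [mul_assoc, ← Real.sqrt_mul hn0.le, mul_div_cancel₀ _ hn0.ne']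
      _ ≤ f n * √(Real.log n / n) :=
          mul_le_mul_of_nonneg_right (hn₀ n (by omega)) (Real.sqrt_nonneg _)
      _ ≤ L := hfn
  have hlower := Real.lt_sqrt_of_sq_lt hlogn
  rw [div_lt_iff₀ hc] at hlower
  linarith

end Sidon

open Sidon

theorem erdos_infinite_sidon_general (A : Set ℕ)
    (hsidon : ∀ a ∈ A, ∀ b ∈ A, ∀ c ∈ A, ∀ d ∈ A,
      a + b = c + d → ({a, b} : Set ℕ) = {c, d}) :
    (∃ L : ℝ, ∃ᶠ n : ℕ in Filter.atTop,
      (Nat.card {a : ℕ | a ∈ A ∧ a ≤ n} : ℝ) * Real.sqrt (Real.log n / n) ≤ L) ∧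
    ¬ ∃ c : ℝ, 0 < c ∧ ∃ n₀ : ℕ, ∀ n ≥ n₀,
      c * Real.sqrt n ≤ (Nat.card {a : ℕ | a ∈ A ∧ a ≤ n} : ℝ) := by
  obtain ⟨L, hL⟩ : ∃ L : ℝ, ∃ᶠ n : ℕ in Filter.atTop,
      (Nat.card {a : ℕ | a ∈ A ∧ a ≤ n} : ℝ) * Real.sqrt (Real.log n / n) ≤ L := by
    refine ⟨√3458, (tendsto_pow_atTop_atTop_of_one_lt (α := ℕ) one_lt_two).frequently ?_⟩
    refine (IsSidon.frequently_mul_sq_card_le hsidon).mono fun j hj => ?_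
    push_cast
    exact mul_sqrt_log_two_pow_div_le (Nat.cast_nonneg _) hj
  exact ⟨⟨L, hL⟩, not_exists_mul_sqrt_le_of_frequently hL⟩

/-- Erdős: every infinite Sidon set A of positive integers has
liminf A(n)·√(log n / n) finite; in particular no infinite Sidon set satisfies
A(n) ≥ c√n for some c > 0 and all large n. -/
theorem erdos_infinite_sidon (A : Set ℕ) (hA : A.Infinite) (hpos : ∀ a ∈ A, 1 ≤ a)
    (hsidon : ∀ a ∈ A, ∀ b ∈ A, ∀ c ∈ A, ∀ d ∈ A,
      a + b = c + d → ({a, b} : Set ℕ) = {c, d}) :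
    (∃ L : ℝ, ∃ᶠ n : ℕ in Filter.atTop,
      (Nat.card {a : ℕ | a ∈ A ∧ a ≤ n} : ℝ) * Real.sqrt (Real.log n / n) ≤ L) ∧
    ¬ ∃ c : ℝ, 0 < c ∧ ∃ n₀ : ℕ, ∀ n ≥ n₀,
      c * Real.sqrt n ≤ (Nat.card {a : ℕ | a ∈ A ∧ a ≤ n} : ℝ) :=
  erdos_infinite_sidon_general A hsidon
end

section
/- Let h ≥ 2 and let s, t be integers with gcd(h, s − t) = 1. Let Y₀ be an infinite set of nonnegative integers with infinite gaps and X₀ = ℕ₀ \ Y₀. Then the set A = {s} ∪ {hx + t : x ∈ X₀} is an asymptotic nonbasis of order h for ℕ₀. -/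
/-- Nathanson: if gcd(h, s−t) = 1 and Y₀ ⊆ ℕ₀ is infinite with infinite gaps, then
A = {s} ∪ {hx + t : x ∈ ℕ₀ \ Y₀} is an asymptotic nonbasis of order h for ℕ₀. -/
theorem nonbasis_construction (h : ℕ) (hh : 2 ≤ h) (s t : ℕ)
    (hst : Int.gcd (h : ℤ) ((s : ℤ) - (t : ℤ)) = 1)
    (Y₀ : Set ℕ) (hY : Y₀.Infinite)
    (hgaps : ∀ C : ℝ, 0 < C →
      {p : ℕ × ℕ | p.1 ∈ Y₀ ∧ p.2 ∈ Y₀ ∧ p.1 ≠ p.2 ∧ |(p.1 : ℝ) - (p.2 : ℝ)| ≤ C}.Finite) :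
    {n : ℕ | ¬ ∃ f : Fin h → ℕ,
        (∀ i, f i ∈ ({s} ∪ {m : ℕ | ∃ x ∈ (Set.univ \ Y₀ : Set ℕ), m = h * x + t} : Set ℕ)) ∧
        ∑ i, f i = n}.Infinite := by
  classical
  have key : ∀ y ∈ Y₀, (h * y + (h - 1) * s + t) ∈ {n : ℕ | ¬ ∃ f : Fin h → ℕ,
      (∀ i, f i ∈ ({s} ∪ {m : ℕ | ∃ x ∈ (Set.univ \ Y₀ : Set ℕ), m = h * x + t} : Set ℕ)) ∧
      ∑ i, f i = n} := by
    intro y hy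
    simp only [Set.mem_setOf_eq]
    rintro ⟨f, hf, hsum⟩
    set P : Fin h → Prop := fun i => ∃ x, x ∉ Y₀ ∧ f i = h * x + t with hP
    set J : Finset (Fin h) := Finset.univ.filter (fun i => ¬ P i) with hJ
    have hJs : ∀ i ∈ J, f i = s := by
      intro i hi
      have hnp : ¬ P i := (Finset.mem_filter.mp hi).2
      rcases hf i with h1 | h2
      · simpa using h1
      · exact absurd (by obtain ⟨x, hx, hfe⟩ := h2; exact ⟨x, hx.2, hfe⟩) hnp
    set g : Fin h → ℕ := fun i => if hp : P i then hp.choose else 0 with hg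
    have hgspec : ∀ i ∉ J, f i = h * g i + t ∧ g i ∉ Y₀ := by
      intro i hi
      have hp : P i := by
        by_contra hnp
        exact hi (Finset.mem_filter.mpr ⟨Finset.mem_univ _, hnp⟩)
      have := hp.choose_spec
      simp only [hg, dif_pos hp]
      exact ⟨this.2, this.1⟩
    -- split the sum
    have hsplit : ∑ i, f i = ∑ i ∈ J, f i + ∑ i ∈ Jᶜ, f i :=
      (Finset.sum_add_sum_compl J f).symm
    have h1 : ∑ i ∈ J, f i = J.card * s := by
      rw [Finset.sum_congr rfl hJs, Finset.sum_const, smul_eq_mul]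
    have h2 : ∑ i ∈ Jᶜ, f i = h * (∑ i ∈ Jᶜ, g i) + Jᶜ.card * t := by
      rw [Finset.sum_congr rfl (fun i hi => (hgspec i (Finset.mem_compl.mp hi)).1)]
      rw [Finset.sum_add_distrib, Finset.sum_const, smul_eq_mul, Finset.mul_sum]
    set j := J.card with hjdef
    set X := ∑ i ∈ Jᶜ, g i with hXdef
    have hcard : j + Jᶜ.card = h := by
      rw [hjdef, Finset.card_add_card_compl, Fintype.card_fin]
    have hjle : j ≤ h := le_of_add_le_left hcard.le
    -- main equation over ℤ
    have heq : (h : ℤ) * y + (h - 1) * s + t = j * s + h * X + (h - j) * t := by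
      have hne : h * y + (h - 1) * s + t = j * s + (h * X + Jᶜ.card * t) := by
        rw [← hsum, hsplit, h1, h2]
      have hk : (Jᶜ.card : ℤ) = (h : ℤ) - j := by
        have := hcard; push_cast [← this]; ring
      have := congrArg (fun n : ℕ => (n : ℤ)) hne
      simp only [Nat.cast_add, Nat.cast_mul] at this
      rw [Nat.cast_sub (show 1 ≤ h by omega)] at this
      rw [hk] at this
      push_cast at this ⊢
      linarith
    have hdvd : (h : ℤ) ∣ ((j : ℤ) - (h - 1)) * ((s : ℤ) - t) := by
      refine ⟨(y : ℤ) - X, ?_⟩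
      linarith [heq]
    have hcop : IsCoprime (h : ℤ) ((s : ℤ) - t) := by
      rw [Int.isCoprime_iff_gcd_eq_one]; exact hst
    have hdvd2 : (h : ℤ) ∣ ((j : ℤ) - (h - 1)) :=
      hcop.dvd_of_dvd_mul_right hdvd
    have hjeq : (j : ℤ) = (h : ℤ) - 1 := by
      have habs : |((j : ℤ) - (h - 1))| < (h : ℤ) := by
        rw [abs_lt]
        constructor
        · have : (0 : ℤ) ≤ j := Int.ofNat_nonneg j
          have hh2 : (2 : ℤ) ≤ h := by exact_mod_cast hh
          linarith
        · have : (j : ℤ) ≤ h := by exact_mod_cast hjle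
          have hh2 : (2 : ℤ) ≤ h := by exact_mod_cast hh
          linarith
      have := Int.eq_zero_of_abs_lt_dvd hdvd2 habs
      linarith
    have hjnat : j = h - 1 := by omega
    have hkcard : Jᶜ.card = 1 := by omega
    obtain ⟨i₀, hi₀⟩ := Finset.card_eq_one.mp hkcard
    have hXeq : X = g i₀ := by rw [hXdef, hi₀, Finset.sum_singleton]
    have hyX : (y : ℤ) = X := by
      have : (h : ℤ) * ((y : ℤ) - X) = 0 := by
        have : ((j : ℤ) - (h - 1)) = 0 := by linarith
        nlinarith [heq]
      have hh0 : (h : ℤ) ≠ 0 := by positivity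
      have := mul_eq_zero.mp this
      rcases this with h' | h'
      · exact absurd h' hh0
      · linarith
    have hi₀J : i₀ ∉ J := by
      have : i₀ ∈ Jᶜ := by rw [hi₀]; exact Finset.mem_singleton_self _
      exact Finset.mem_compl.mp this
    have := (hgspec i₀ hi₀J).2
    have hyg : y = g i₀ := by
      have : (y : ℤ) = (g i₀ : ℤ) := by rw [hyX, hXeq]
      exact_mod_cast this
    exact this (hyg ▸ hy)
  have hsub : (fun y => h * y + (h - 1) * s + t) '' Y₀ ⊆ {n : ℕ | ¬ ∃ f : Fin h → ℕ,
      (∀ i, f i ∈ ({s} ∪ {m : ℕ | ∃ x ∈ (Set.univ \ Y₀ : Set ℕ), m = h * x + t} : Set ℕ)) ∧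
      ∑ i, f i = n} := by
    rintro n ⟨y, hy, rfl⟩
    exact key y hy
  have hinj : Set.InjOn (fun y => h * y + (h - 1) * s + t) Y₀ := by
    intro a _ b _ hab
    simp only at hab
    have : h * a = h * b := by omega
    exact Nat.eq_of_mul_eq_mul_left (by omega) this
  exact (hY.image hinj).mono hsub
end
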